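/- arXiv:1806.10425 — 7 statements merged into one kernel-verified Lean document; each statement's English description precedes it below -/
import Mathlib

section
/- Let t ≥ 4 be an integer, let G be a finite simple graph, and let x, y be two distinct vertices of G with |N_G(x) ∩ N_G(y)| ≥ t − 1. Then in the K_{2,t}-bootstrap closure Ĝ of G one has N_Ĝ(x) \ {y} = N_Ĝ(y) \ {x}. -/
/-- `G` contains a copy of `H` as a subgraph. -/
def HasCopy {W V : Type*} (H : SimpleGraph W) (G : SimpleGraph V) : Prop :=
  ∃ f : W → V, Function.Injective f ∧ ∀ ⦃a b : W⦄, H.Adj a b → G.Adj (f a) (f b)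

/-- Adding the edge `{x, y}` to `G` creates a new copy of `H` containing that edge. -/
def CreatesCopy {W V : Type*} (H : SimpleGraph W) (G : SimpleGraph V) (x y : V) : Prop :=
  ∃ f : W → V, Function.Injective f ∧
    (∀ ⦃a b : W⦄, H.Adj a b →
      G.Adj (f a) (f b) ∨ (f a = x ∧ f b = y) ∨ (f a = y ∧ f b = x)) ∧
    ∃ a b : W, H.Adj a b ∧ ((f a = x ∧ f b = y) ∨ (f a = y ∧ f b = x))

/-- One step of the `H`-bootstrap process: add to `G` all non-edges whose addition
creates a new copy of `H` containing them. -/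
def bootStep {W V : Type*} (H : SimpleGraph W) (G : SimpleGraph V) : SimpleGraph V where
  Adj x y := G.Adj x y ∨ (¬ G.Adj x y ∧ x ≠ y ∧ CreatesCopy H G x y)
  symm := by
    constructor
    intro x y h
    rcases h with h | ⟨hn, hne, f, hf, hmap, a, b, hab, hor⟩
    · exact Or.inl h.symm
    · exact Or.inr ⟨fun h' => hn h'.symm, hne.symm, f, hf,
        fun a b hab => by have := hmap hab; tauto, a, b, hab, hor.symm⟩
  loopless := by
    constructor
    intro x h
    rcases h with h | ⟨_, hne, _⟩
    · exact G.loopless.irrefl x h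
    · exact hne rfl

def bootSeq {W V : Type*} (H : SimpleGraph W) (G : SimpleGraph V) : ℕ → SimpleGraph V
  | 0 => G
  | n + 1 => bootStep H (bootSeq H G n)

/-- The `H`-bootstrap closure of `G`: the union of the iterated bootstrap steps. -/
def bootClosure {W V : Type*} (H : SimpleGraph W) (G : SimpleGraph V) : SimpleGraph V :=
  ⨆ n, bootSeq H G n

/-- `G` percolates in the `H`-bootstrap process, i.e. its closure is complete. -/
def Percolates {W V : Type*} (H : SimpleGraph W) (G : SimpleGraph V) : Prop :=
  bootClosure H G = ⊤

/-
Fix t - 1 common neighbours of x and y. If x ~ z at some stage of the process and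
z ≠ y, then x and y together with those common neighbours and z span a copy of K_{2,t} in which
yz is the only possibly missing edge, so yz is present one stage later.
-/

theorem Set.exists_finset_subset_card_eq {α : Type*} {s : Set α} {k : ℕ} (hk : k ≤ s.ncard) :
    ∃ S : Finset α, ↑S ⊆ s ∧ S.card = k := by
  by_cases hs : s.Finite
  · obtain ⟨S, hSs, hS⟩ :=
      Finset.exists_subset_card_eq (hk.trans_eq (Set.ncard_eq_toFinset_card s hs))
    exact ⟨S, by simpa using hSs, hS⟩
  · exact Set.Infinite.exists_subset_card_eq hs k

section Bootstrap

variable {W V : Type*}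

theorem le_bootStep (H : SimpleGraph W) (G : SimpleGraph V) : G ≤ bootStep H G :=
  fun _ _ h => Or.inl h

theorem le_bootSeq (H : SimpleGraph W) (G : SimpleGraph V) : ∀ n, G ≤ bootSeq H G n
  | 0 => le_rfl
  | n + 1 => (le_bootSeq H G n).trans (le_bootStep H _)

theorem bootClosure_adj {H : SimpleGraph W} {G : SimpleGraph V} {a b : V} :
    (bootClosure H G).Adj a b ↔ ∃ n, (bootSeq H G n).Adj a b :=
  SimpleGraph.iSup_adj

end Bootstrap

section CompleteBipartite

variable {V : Type*} {G : SimpleGraph V} {t : ℕ}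

theorem createsCopy_completeBipartiteGraph {u v w : V} {T : Finset V} (hT : T.card = t)
    (huv : u ≠ v) (hvw : v ≠ w) (hw : w ∈ T) (hu : ∀ c ∈ T, G.Adj u c)
    (hv : ∀ c ∈ T, c ≠ w → G.Adj v c) :
    CreatesCopy (completeBipartiteGraph (Fin 2) (Fin t)) G v w := by
  set e : Fin t ≃ T := (T.equivFinOfCardEq hT).symm
  have hmap : ∀ (a : Fin 2) (b : Fin t),
      G.Adj (![u, v] a) (e b) ∨ (![u, v] a = v ∧ (e b : V) = w) := by
    intro a b
    fin_cases a
    · exact Or.inl (hu _ (e b).2)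
    · by_cases hb : (e b : V) = w
      · exact Or.inr ⟨rfl, hb⟩
      · exact Or.inl (hv _ (e b).2 hb)
  have hleft : Function.Injective ![u, v] := by
    intro a b hab
    fin_cases a <;> fin_cases b <;> simp_all [huv.symm]
  have hright : Function.Injective fun b => (e b : V) :=
    Subtype.val_injective.comp e.injective
  have hdisj : ∀ a b, ![u, v] a ≠ (e b : V) := by
    intro a b hab
    rcases hmap a b with h | ⟨hav, hbw⟩
    · exact h.ne hab
    · exact hvw (hav.symm.trans (hab.trans hbw))
  refine ⟨Sum.elim ![u, v] fun b => (e b : V), hleft.sumElim hright hdisj, ?_,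
    Sum.inl 1, Sum.inr (e.symm ⟨w, hw⟩), by simp, Or.inl ⟨rfl, by simp⟩⟩
  rintro (a | a) (b | b) hab
  · simp at hab
  · rcases hmap a b with h | h
    · exact Or.inl h
    · exact Or.inr (Or.inl h)
  · rcases hmap b a with h | h
    · exact Or.inl h.symm
    · exact Or.inr (Or.inr h.symm)
  · simp at hab

theorem bootStep_adj_of_adj_of_commonNeighbors {x y z : V} {S : Finset V} (ht : 0 < t)
    (hS : S.card = t - 1) (hSx : ∀ c ∈ S, G.Adj x c) (hSy : ∀ c ∈ S, G.Adj y c)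
    (hxy : x ≠ y) (hyz : y ≠ z) (hxz : G.Adj x z) :
    (bootStep (completeBipartiteGraph (Fin 2) (Fin t)) G).Adj y z := by
  classical
  by_cases hGyz : G.Adj y z
  · exact Or.inl hGyz
  have hzS : z ∉ S := fun hz => hGyz (hSy z hz)
  refine Or.inr ⟨hGyz, hyz, createsCopy_completeBipartiteGraph (T := insert z S)
    (by rw [Finset.card_insert_of_notMem hzS]; omega) hxy hyz (Finset.mem_insert_self z S)
    ?_ ?_⟩
  · simpa [hxz] using hSx
  · intro c hc hcz
    exact hSy c ((Finset.mem_insert.1 hc).resolve_left hcz)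

theorem neighborSet_bootClosure_diff_subset {x y : V} (ht : 0 < t) (hxy : x ≠ y)
    (hcommon : t - 1 ≤ (G.neighborSet x ∩ G.neighborSet y).ncard) :
    (bootClosure (completeBipartiteGraph (Fin 2) (Fin t)) G).neighborSet x \ {y} ⊆
      (bootClosure (completeBipartiteGraph (Fin 2) (Fin t)) G).neighborSet y \ {x} := by
  rintro z ⟨hxz, hzy⟩
  obtain ⟨S, hSsub, hS⟩ := Set.exists_finset_subset_card_eq hcommon
  obtain ⟨n, hn⟩ := bootClosure_adj.1 hxz
  have hGn := le_bootSeq (completeBipartiteGraph (Fin 2) (Fin t)) G n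
  refine ⟨bootClosure_adj.2 ⟨n + 1, bootStep_adj_of_adj_of_commonNeighbors ht hS
    (fun c hc => hGn (hSsub hc).1) (fun c hc => hGn (hSsub hc).2) hxy
    (Ne.symm hzy) hn⟩, hn.ne'⟩

end CompleteBipartite

theorem stmt_0_general {V : Type*} (t : ℕ) (ht : 4 ≤ t) (G : SimpleGraph V)
    (x y : V) (hxy : x ≠ y)
    (hcommon : t - 1 ≤ (G.neighborSet x ∩ G.neighborSet y).ncard) :
    (bootClosure (completeBipartiteGraph (Fin 2) (Fin t)) G).neighborSet x \ {y} =
      (bootClosure (completeBipartiteGraph (Fin 2) (Fin t)) G).neighborSet y \ {x} := by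
  have ht' : 0 < t := by omega
  refine (neighborSet_bootClosure_diff_subset ht' hxy hcommon).antisymm ?_
  exact neighborSet_bootClosure_diff_subset ht' hxy.symm (by rwa [Set.inter_comm])

theorem stmt_0 {V : Type*} [Fintype V] (t : ℕ) (ht : 4 ≤ t) (G : SimpleGraph V)
    (x y : V) (hxy : x ≠ y)
    (hcommon : t - 1 ≤ (G.neighborSet x ∩ G.neighborSet y).ncard) :
    (bootClosure (completeBipartiteGraph (Fin 2) (Fin t)) G).neighborSet x \ {y} =
      (bootClosure (completeBipartiteGraph (Fin 2) (Fin t)) G).neighborSet y \ {x} :=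
  stmt_0_general t ht G x y hxy hcommon
end

section
/- Let t ≥ 4 be an integer and let G be a finite connected simple graph containing a copy of K_{t−1,t−1} as a subgraph. Then the K_{2,t}-bootstrap closure Ĝ of G is either a complete graph, a complete bipartite graph, or a complete split graph whose clique part has size exactly t − 1. -/
/-!
Write `Ĝ` for the closure, let `X, Y` be the sides of a `K_{t-1,t-1}` in it, `A` the set of
vertices adjacent to all of `Y` and `B` the set of those adjacent to all of `X`. Since `Ĝ` is
closed under the `K_{2,t}`-process, whenever `x ≠ u` have `t - 1` common neighbours, every other
neighbour of `u` is a neighbour of `x`. Hence any two vertices of `A` (or of `B`) are twins, so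
`A` and `B` are each a clique or an independent set; moreover `A` is complete to `B` and `A ∪ B`
is closed under adjacency, hence is everything by connectivity. If `A` is a clique and `B` is
independent, then `A = X`: a vertex of `A` outside `X`, together with `X` minus one vertex `x`,
would give `x` and a vertex of `Y` `t - 1` common neighbours and so force an edge inside `B`.
-/

section Bootstrap

variable {W V : Type*}

def IsBootClosed (H : SimpleGraph W) (G : SimpleGraph V) : Prop :=
  ∀ ⦃x y : V⦄, x ≠ y → ¬ G.Adj x y → ¬ CreatesCopy H G x y

lemma bootSeq_monotone (H : SimpleGraph W) (G : SimpleGraph V) : Monotone (bootSeq H G) :=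
  monotone_nat_of_le_succ fun _ _ _ h => Or.inl h

lemma le_bootClosure (H : SimpleGraph W) (G : SimpleGraph V) : G ≤ bootClosure H G :=
  le_iSup (bootSeq H G) 0

/-- A copy of the finite graph `H` in the closure already lies in some finite stage. -/
lemma isBootClosed_bootClosure [Finite W] (H : SimpleGraph W) (G : SimpleGraph V) :
    IsBootClosed H (bootClosure H G) := by
  rintro x y hne hxy ⟨f, hf, hmap, a₀, b₀, hab₀, hf₀⟩
  have hstage : ∀ p : W × W, ∃ n, (bootClosure H G).Adj (f p.1) (f p.2) →
      (bootSeq H G n).Adj (f p.1) (f p.2) := by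
    intro p
    by_cases h : (bootClosure H G).Adj (f p.1) (f p.2)
    · obtain ⟨n, hn⟩ := SimpleGraph.iSup_adj.mp h
      exact ⟨n, fun _ => hn⟩
    · exact ⟨0, fun h' => absurd h' h⟩
  choose n hn using hstage
  obtain ⟨N, hN⟩ := Finite.exists_le n
  have hstep : (bootSeq H G (N + 1)).Adj x y :=
    Or.inr ⟨fun h => hxy (le_iSup (bootSeq H G) N h), hne, f, hf,
      fun a b hab => (hmap hab).imp_left fun h => bootSeq_monotone H G (hN (a, b)) (hn (a, b) h),
      a₀, b₀, hab₀, hf₀⟩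
  exact hxy (le_iSup (bootSeq H G) (N + 1) hstep)

lemma HasCopy.exists_finset_adj {α β : Type*} [Fintype α] [Fintype β] {G : SimpleGraph V}
    (h : HasCopy (completeBipartiteGraph α β) G) :
    ∃ X Y : Finset V, X.card = Fintype.card α ∧ Y.card = Fintype.card β ∧
      ∀ x ∈ X, ∀ y ∈ Y, G.Adj x y := by
  obtain ⟨f, hf, hadj⟩ := h
  refine ⟨Finset.univ.map ⟨f ∘ Sum.inl, hf.comp Sum.inl_injective⟩,
    Finset.univ.map ⟨f ∘ Sum.inr, hf.comp Sum.inr_injective⟩, by simp, by simp, ?_⟩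
  simp only [Finset.mem_map, Finset.mem_univ, true_and, Function.Embedding.coeFn_mk,
    Function.comp_apply]
  rintro _ ⟨a, rfl⟩ _ ⟨b, rfl⟩
  exact hadj (by simp)

end Bootstrap

namespace SimpleGraph

variable {V : Type*} {G : SimpleGraph V}

lemma Preconnected.mem_of_adj_closed (hG : G.Preconnected) {S : Set V} {u : V} (hu : u ∈ S)
    (hS : ∀ ⦃a b⦄, a ∈ S → G.Adj a b → b ∈ S) (v : V) : v ∈ S := by
  obtain ⟨p⟩ := hG u v
  induction p with
  | nil => exact hu
  | cons h _ ih => exact ih (hS hu h)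

lemma isIndepSet_or_isClique_of_twins {S : Set V}
    (hS : ∀ a ∈ S, ∀ a' ∈ S, a ≠ a' → ∀ w, G.Adj a' w → w ≠ a → G.Adj a w) :
    G.IsIndepSet S ∨ G.IsClique S := by
  by_cases hedge : ∃ a₁ ∈ S, ∃ a₂ ∈ S, G.Adj a₁ a₂
  · right
    obtain ⟨a₁, ha₁, a₂, ha₂, h₁₂⟩ := hedge
    have hto₂ : ∀ a ∈ S, a ≠ a₂ → G.Adj a a₂ := by
      intro a ha hne
      by_cases h : a = a₁
      · exact h ▸ h₁₂
      · exact hS a ha a₁ ha₁ h a₂ h₁₂ hne.symm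
    intro a ha a' ha' hne
    by_cases h' : a' = a₂
    · exact h' ▸ hto₂ a ha (h' ▸ hne)
    · by_cases h : a = a₂
      · exact h ▸ (hto₂ a' ha' h').symm
      · exact hS a ha a₂ ha₂ h a' (hto₂ a' ha' h').symm hne.symm
  · left
    exact fun a ha a' ha' _ hadj => hedge ⟨a, ha, a', ha', hadj⟩

section Join

variable {A B : Set V}

lemma eq_top_of_isClique_of_isClique (hcover : ∀ v, v ∈ A ∨ v ∈ B)
    (hAB : ∀ a ∈ A, ∀ b ∈ B, a ≠ b → G.Adj a b) (hA : G.IsClique A) (hB : G.IsClique B) :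
    G = ⊤ := by
  ext x y
  refine ⟨Adj.ne, fun hxy => ?_⟩
  rcases hcover x with hx | hx <;> rcases hcover y with hy | hy
  · exact hA hx hy hxy
  · exact hAB x hx y hy hxy
  · exact (hAB y hy x hx (Ne.symm hxy)).symm
  · exact hB hx hy hxy

lemma adj_iff_of_isIndepSet_of_isIndepSet (hcover : ∀ v, v ∈ A ∨ v ∈ B)
    (hAB : ∀ a ∈ A, ∀ b ∈ B, a ≠ b → G.Adj a b) (hA : G.IsIndepSet A) (hB : G.IsIndepSet B)
    (x y : V) : G.Adj x y ↔ (x ∈ A ∧ y ∉ A) ∨ (x ∉ A ∧ y ∈ A) := by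
  constructor
  · intro h
    by_cases hx : x ∈ A
    · exact Or.inl ⟨hx, fun hy => hA hx hy h.ne h⟩
    · have hyB : y ∉ B := fun hy => hB ((hcover x).resolve_left hx) hy h.ne h
      exact Or.inr ⟨hx, (hcover y).resolve_right hyB⟩
  · rintro (⟨hx, hy⟩ | ⟨hx, hy⟩)
    · exact hAB x hx y ((hcover y).resolve_left hy) (by rintro rfl; exact hy hx)
    · exact (hAB y hy x ((hcover x).resolve_left hx) (by rintro rfl; exact hx hy)).symm

lemma adj_iff_of_isClique_of_isIndepSet (hcover : ∀ v, v ∈ A ∨ v ∈ B)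
    (hAB : ∀ a ∈ A, ∀ b ∈ B, a ≠ b → G.Adj a b) (hA : G.IsClique A) (hB : G.IsIndepSet B)
    (x y : V) : G.Adj x y ↔ x ≠ y ∧ (x ∈ A ∨ y ∈ A) := by
  constructor
  · intro h
    refine ⟨h.ne, by_contra fun hxy => ?_⟩
    push Not at hxy
    exact hB ((hcover x).resolve_left hxy.1) ((hcover y).resolve_left hxy.2) h.ne h
  · rintro ⟨hxy, hx | hy⟩
    · rcases hcover y with hy | hy
      · exact hA hx hy hxy
      · exact hAB x hx y hy hxy
    · rcases hcover x with hx | hx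
      · exact hA hx hy hxy
      · exact (hAB y hy x hx (Ne.symm hxy)).symm

end Join

end SimpleGraph

section Closed

open SimpleGraph

variable {V : Type*} {t : ℕ} {C : SimpleGraph V} {X Y : Finset V}

/-- The copy of `K_{2,t}` completed by the edge `xy` has small side `{x, u}` and large side
`insert y S`. -/
theorem IsBootClosed.adj_of_commonNeighbors
    (hC : IsBootClosed (completeBipartiteGraph (Fin 2) (Fin t)) C) {x u y : V} {S : Finset V}
    (hS : S.card + 1 = t) (hxu : x ≠ u) (hyx : y ≠ x)
    (hSx : ∀ s ∈ S, C.Adj x s) (hSu : ∀ s ∈ S, C.Adj u s) (huy : C.Adj u y) : C.Adj x y := by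
  classical
  by_contra hxy
  have hyS : y ∉ S := fun hy => hxy (hSx y hy)
  have hT : (insert y S).card = t := by rw [Finset.card_insert_of_notMem hyS, hS]
  set e := Finset.equivFinOfCardEq hT
  have hxT : ∀ v ∈ insert y S, v ≠ y → C.Adj x v := fun v hv hvy =>
    hSx v ((Finset.mem_insert.mp hv).resolve_left hvy)
  have huT : ∀ v ∈ insert y S, C.Adj u v := by
    simpa only [Finset.forall_mem_insert] using ⟨huy, hSu⟩
  let f : Fin 2 ⊕ Fin t → V := Sum.elim ![x, u] fun j => e.symm j
  have hedge : ∀ i j, C.Adj (f (.inl i)) (f (.inr j)) ∨ (f (.inl i) = x ∧ f (.inr j) = y) := by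
    intro i j
    have hj := (e.symm j).2
    fin_cases i
    · by_cases hjy : (e.symm j : V) = y
      · exact Or.inr ⟨rfl, hjy⟩
      · exact Or.inl (hxT _ hj hjy)
    · exact Or.inl (huT _ hj)
  have hinj : Function.Injective f := by
    refine (injective_pair_iff_ne.mpr hxu).sumElim
      (Subtype.val_injective.comp e.symm.injective) fun i j hij => ?_
    rcases hedge i j with h | ⟨hi, hj⟩
    · exact h.ne hij
    · exact hyx (hj.symm.trans (hij.symm.trans hi))
  refine hC hyx.symm hxy ⟨f, hinj, ?_, .inl 0, .inr (e ⟨y, Finset.mem_insert_self y S⟩), by simp,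
    Or.inl ⟨rfl, by simp [f]⟩⟩
  rintro (i | j) (i' | j') hadj
  · simp at hadj
  · exact (hedge i j').imp_right Or.inl
  · exact (hedge i' j).imp (fun h => h.symm) fun h => Or.inr h.symm
  · simp at hadj

def commonNeighborSet (C : SimpleGraph V) (Y : Finset V) : Set V := {v | ∀ y ∈ Y, C.Adj v y}

theorem IsBootClosed.adj_of_mem_commonNeighborSet
    (hC : IsBootClosed (completeBipartiteGraph (Fin 2) (Fin t)) C)
    (hY : Y.card + 1 = t) {a a' w : V} (ha : a ∈ commonNeighborSet C Y)
    (ha' : a' ∈ commonNeighborSet C Y) (hne : a ≠ a') (hw : C.Adj a' w) (hwa : w ≠ a) :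
    C.Adj a w :=
  hC.adj_of_commonNeighbors hY hne hwa ha ha' hw

lemma coe_subset_commonNeighborSet (hXY : ∀ x ∈ X, ∀ y ∈ Y, C.Adj x y) :
    ↑X ⊆ commonNeighborSet C Y :=
  fun x hx y hy => hXY x hx y hy

lemma IsBootClosed.adj_of_mem_commonNeighborSet_of_mem_commonNeighborSet
    (hC : IsBootClosed (completeBipartiteGraph (Fin 2) (Fin t)) C) (hY : Y.card + 1 = t)
    (hXY : ∀ x ∈ X, ∀ y ∈ Y, C.Adj x y) (hX : X.Nonempty) {a b : V}
    (ha : a ∈ commonNeighborSet C Y) (hb : b ∈ commonNeighborSet C X) (hab : a ≠ b) :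
    C.Adj a b := by
  obtain ⟨x, hx⟩ := hX
  by_cases hax : a = x
  · exact hax ▸ (hb x hx).symm
  · exact hC.adj_of_mem_commonNeighborSet hY ha (coe_subset_commonNeighborSet hXY hx) hax
      (hb x hx).symm hab.symm

lemma IsBootClosed.mem_or_mem_of_adj
    (hC : IsBootClosed (completeBipartiteGraph (Fin 2) (Fin t)) C) (hY : Y.card + 1 = t)
    (hXY : ∀ x ∈ X, ∀ y ∈ Y, C.Adj x y) {a v : V} (ha : a ∈ commonNeighborSet C Y)
    (hav : C.Adj a v) : v ∈ commonNeighborSet C Y ∨ v ∈ commonNeighborSet C X := by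
  by_cases hvX : v ∈ X
  · exact Or.inl (coe_subset_commonNeighborSet hXY hvX)
  · refine Or.inr fun x hx => ?_
    by_cases hax : a = x
    · exact hax ▸ hav.symm
    · exact (hC.adj_of_mem_commonNeighborSet hY (coe_subset_commonNeighborSet hXY hx) ha
        (Ne.symm hax) hav fun h => hvX (h ▸ hx)).symm

lemma IsBootClosed.commonNeighborSet_eq_of_isClique_of_isIndepSet
    (hC : IsBootClosed (completeBipartiteGraph (Fin 2) (Fin t)) C) (hX : X.card + 1 = t)
    (hXY : ∀ x ∈ X, ∀ y ∈ Y, C.Adj x y) (hXne : X.Nonempty) (hY : 1 < Y.card)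
    (hA : C.IsClique (commonNeighborSet C Y)) (hB : C.IsIndepSet (commonNeighborSet C X)) :
    commonNeighborSet C Y = ↑X := by
  classical
  refine Set.Subset.antisymm (fun a ha => by_contra fun haX => ?_)
    (coe_subset_commonNeighborSet hXY)
  obtain ⟨x₀, hx₀⟩ := hXne
  obtain ⟨y₀, hy₀, y₁, hy₁, hy₀₁⟩ := Finset.one_lt_card.mp hY
  have hYB : ↑Y ⊆ commonNeighborSet C X := fun y hy x hx => (hXY x hx y hy).symm
  have hS : (insert a (X.erase x₀)).card + 1 = t := by
    rw [Finset.card_insert_of_notMem fun h => haX (Finset.mem_of_mem_erase h),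
      Finset.card_erase_of_mem hx₀]
    have := Finset.card_pos.mpr ⟨x₀, hx₀⟩
    omega
  refine hB (hYB hy₀) (hYB hy₁) hy₀₁ (hC.adj_of_commonNeighbors hS (hXY x₀ hx₀ y₀ hy₀).ne'
    hy₀₁.symm ?_ ?_ (hXY x₀ hx₀ y₁ hy₁))
  · simp only [Finset.forall_mem_insert, Finset.mem_erase]
    exact ⟨(ha y₀ hy₀).symm, fun s hs => (hXY s hs.2 y₀ hy₀).symm⟩
  · simp only [Finset.forall_mem_insert, Finset.mem_erase]
    refine ⟨hA (coe_subset_commonNeighborSet hXY hx₀) ha ?_, fun s hs =>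
      hA (coe_subset_commonNeighborSet hXY hx₀) (coe_subset_commonNeighborSet hXY hs.2) hs.1.symm⟩
    rintro rfl
    exact haX hx₀

theorem IsBootClosed.eq_top_or_exists_adj_iff
    (hC : IsBootClosed (completeBipartiteGraph (Fin 2) (Fin t)) C) (hconn : C.Preconnected)
    (ht : 3 ≤ t) (hX : X.card + 1 = t) (hY : Y.card + 1 = t)
    (hXY : ∀ x ∈ X, ∀ y ∈ Y, C.Adj x y) :
    C = ⊤ ∨ (∃ A : Set V, ∀ x y : V, C.Adj x y ↔ ((x ∈ A ∧ y ∉ A) ∨ (x ∉ A ∧ y ∈ A))) ∨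
      (∃ K : Set V, K.ncard = t - 1 ∧ ∀ x y : V, C.Adj x y ↔ (x ≠ y ∧ (x ∈ K ∨ y ∈ K))) := by
  set A := commonNeighborSet C Y
  set B := commonNeighborSet C X
  have hYX : ∀ y ∈ Y, ∀ x ∈ X, C.Adj y x := fun y hy x hx => (hXY x hx y hy).symm
  have hXne : X.Nonempty := Finset.card_pos.mp (by omega)
  have hYne : Y.Nonempty := Finset.card_pos.mp (by omega)
  have hAB : ∀ a ∈ A, ∀ b ∈ B, a ≠ b → C.Adj a b := fun _ ha _ hb =>
    hC.adj_of_mem_commonNeighborSet_of_mem_commonNeighborSet hY hXY hXne ha hb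
  have hBA : ∀ b ∈ B, ∀ a ∈ A, b ≠ a → C.Adj b a := fun _ hb _ ha =>
    hC.adj_of_mem_commonNeighborSet_of_mem_commonNeighborSet hX hYX hYne hb ha
  have hcover : ∀ v, v ∈ A ∨ v ∈ B := by
    obtain ⟨x₀, hx₀⟩ := hXne
    refine hconn.mem_of_adj_closed (S := A ∪ B) (Or.inl (coe_subset_commonNeighborSet hXY hx₀)) ?_
    rintro a v (ha | hb) hav
    · exact hC.mem_or_mem_of_adj hY hXY ha hav
    · exact (hC.mem_or_mem_of_adj hX hYX hb hav).symm
  rcases isIndepSet_or_isClique_of_twins fun _ ha _ ha' hne _ => hC.adj_of_mem_commonNeighborSet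
      hY ha ha' hne with hAi | hAc <;>
    rcases isIndepSet_or_isClique_of_twins fun _ hb _ hb' hne _ => hC.adj_of_mem_commonNeighborSet
      hX hb hb' hne with hBi | hBc
  · exact .inr <| .inl ⟨A, adj_iff_of_isIndepSet_of_isIndepSet hcover hAB hAi hBi⟩
  · refine .inr <| .inr ⟨Y, by rw [Set.ncard_coe_finset]; omega, ?_⟩
    rw [← hC.commonNeighborSet_eq_of_isClique_of_isIndepSet hY hYX hYne (by omega) hBc hAi]
    exact adj_iff_of_isClique_of_isIndepSet (fun v => (hcover v).symm) hBA hBc hAi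
  · refine .inr <| .inr ⟨X, by rw [Set.ncard_coe_finset]; omega, ?_⟩
    rw [← hC.commonNeighborSet_eq_of_isClique_of_isIndepSet hX hXY hXne (by omega) hAc hBi]
    exact adj_iff_of_isClique_of_isIndepSet hcover hAB hAc hBi
  · exact .inl (eq_top_of_isClique_of_isClique hcover hAB hAc hBc)

end Closed

theorem stmt_3_general {V : Type*} (t : ℕ) (ht : 4 ≤ t) (G : SimpleGraph V)
    (hconn : G.Connected)
    (hK : HasCopy (completeBipartiteGraph (Fin (t - 1)) (Fin (t - 1))) G) :
    bootClosure (completeBipartiteGraph (Fin 2) (Fin t)) G = ⊤ ∨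
    (∃ A : Set V, ∀ x y : V,
      (bootClosure (completeBipartiteGraph (Fin 2) (Fin t)) G).Adj x y ↔
        ((x ∈ A ∧ y ∉ A) ∨ (x ∉ A ∧ y ∈ A))) ∨
    (∃ C : Set V, C.ncard = t - 1 ∧ ∀ x y : V,
      (bootClosure (completeBipartiteGraph (Fin 2) (Fin t)) G).Adj x y ↔
        (x ≠ y ∧ (x ∈ C ∨ y ∈ C))) := by
  obtain ⟨X, Y, hX, hY, hXY⟩ := hK.exists_finset_adj
  rw [Fintype.card_fin] at hX hY
  have hle := le_bootClosure (completeBipartiteGraph (Fin 2) (Fin t)) G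
  exact (isBootClosed_bootClosure _ G).eq_top_or_exists_adj_iff (hconn.mono hle).preconnected
    (by omega) (by omega) (by omega) fun x hx y hy => hle (hXY x hx y hy)

theorem stmt_3 {V : Type*} [Fintype V] (t : ℕ) (ht : 4 ≤ t) (G : SimpleGraph V)
    (hconn : G.Connected)
    (hK : HasCopy (completeBipartiteGraph (Fin (t - 1)) (Fin (t - 1))) G) :
    bootClosure (completeBipartiteGraph (Fin 2) (Fin t)) G = ⊤ ∨
    (∃ A : Set V, ∀ x y : V,
      (bootClosure (completeBipartiteGraph (Fin 2) (Fin t)) G).Adj x y ↔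
        ((x ∈ A ∧ y ∉ A) ∨ (x ∉ A ∧ y ∈ A))) ∨
    (∃ C : Set V, C.ncard = t - 1 ∧ ∀ x y : V,
      (bootClosure (completeBipartiteGraph (Fin 2) (Fin t)) G).Adj x y ↔
        (x ≠ y ∧ (x ∈ C ∨ y ∈ C))) :=
  stmt_3_general t ht G hconn hK
end

section
/- For every integer t ≥ 4, the maximum subgraph density of the graph H_t satisfies m(H_t) = η(t). -/
/-!
A fractional orientation of a graph splits every edge `ab` into two nonnegative shares
`w a b + w b a = 1`; the load of a vertex is the sum of its shares. The edges of any subgraph `H`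
are carried by the vertices of `H`, so if every load is at most `c` then `|E(H)| ≤ c |V(H)|`.
If moreover all loads on a vertex set `S` equal `c` and no share leaves `S`, the subgraph induced
on `S` has density exactly `c`.

For `H_t`, `η(t)` is the density of the first block `G_{t-1}(u; u_1, …, u_r)` when `t` is odd,
and of the first two blocks together with the edges from `u` to the second block when `t` is
even. Shares that are constant on each class of edges make every vertex of this part carry
exactly `η(t)`, and every other vertex at most `η(t)`.
-/

abbrev GVert (r s : ℕ) := Unit ⊕ Fin s ⊕ Fin s × Fin r

def GRel (r s : ℕ) : GVert r s → GVert r s → Prop := fun a b =>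
  match a, b with
  | Sum.inl _, Sum.inr (Sum.inr _) => True
  | Sum.inr (Sum.inl i), Sum.inr (Sum.inr p) => p.1 = i
  | _, _ => False

/-- The graph `G_r(u; u_1, …, u_s)`: `s` copies of `K_{2,r}`, where `{u_i, u_i'}` is the
part of size 2 of the `i`-th copy, glued by identifying all `u_i'` to one vertex `u`.
Here `Sum.inl ()` is `u`, `Sum.inr (Sum.inl i)` is `u_i`, and `Sum.inr (Sum.inr (i, j))`
is the `j`-th vertex of the part of size `r` in the `i`-th copy. -/
def GStar (r s : ℕ) : SimpleGraph (GVert r s) := SimpleGraph.fromRel (GRel r s)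

def htr (t : ℕ) : ℕ := (t - 1) / 2
def hts (t : ℕ) : ℕ := t - 1 - htr t

abbrev HtV (t : ℕ) :=
  GVert (t - 1) (htr t) ⊕ GVert (hts t - 1) (hts t) ⊕ GVert (htr t - 1) (t - 2)

/-- For `r = ⌊(t-1)/2⌋`, `s = t - 1 - r`: the disjoint union of `G_{t-1}(u; u_1, …, u_r)`,
`G_{s-1}(v; v_1, …, v_s)` and `G_{r-1}(w; w_1, …, w_{t-2})`, joining `u` to
`v, v_1, …, v_s` and `v` to `w, w_1, …, w_{t-2}`. -/
def HtRel (t : ℕ) : HtV t → HtV t → Prop := fun a b =>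
  match a, b with
  | Sum.inl x, Sum.inl y => GRel _ _ x y
  | Sum.inr (Sum.inl x), Sum.inr (Sum.inl y) => GRel _ _ x y
  | Sum.inr (Sum.inr x), Sum.inr (Sum.inr y) => GRel _ _ x y
  | Sum.inl (Sum.inl _), Sum.inr (Sum.inl (Sum.inl _)) => True
  | Sum.inl (Sum.inl _), Sum.inr (Sum.inl (Sum.inr (Sum.inl _))) => True
  | Sum.inr (Sum.inl (Sum.inl _)), Sum.inr (Sum.inr (Sum.inl _)) => True
  | Sum.inr (Sum.inl (Sum.inl _)), Sum.inr (Sum.inr (Sum.inr (Sum.inl _))) => True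
  | _, _ => False

/-- The graph `H_t`. -/
def Ht (t : ℕ) : SimpleGraph (HtV t) := SimpleGraph.fromRel (HtRel t)

/-- The density `|E(H)|/|V(H)|` of a subgraph `H`. -/
noncomputable def subDensity {V : Type*} {G : SimpleGraph V} (H : G.Subgraph) : ℚ :=
  (H.edgeSet.ncard : ℚ) / (H.verts.ncard : ℚ)

noncomputable def eta (t : ℕ) : ℚ :=
  if Even t then (6 * (t : ℚ) ^ 2 - 14 * t + 12) / (3 * (t : ℚ) ^ 2 - 4 * t + 8)
  else (2 * (t : ℚ) ^ 2 - 4 * t + 2) / ((t : ℚ) ^ 2 - t + 2)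

open Finset

namespace SimpleGraph

variable {V : Type*} {G : SimpleGraph V} {w : V → V → ℚ}

/-- `m(G) = c`, the maximum being attained. -/
def IsMaxSubgraphDensity (G : SimpleGraph V) (c : ℚ) : Prop :=
  (∀ H : G.Subgraph, H.verts.Nonempty → subDensity H ≤ c) ∧
    ∃ H : G.Subgraph, H.verts.Nonempty ∧ subDensity H = c

/-- `w a b` is the share of the edge `ab` carried by `a`; `∑ b, w a b` is the load of `a`. -/
structure IsFractionalOrientation (G : SimpleGraph V) (w : V → V → ℚ) : Prop where
  nonneg : ∀ a b, 0 ≤ w a b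
  add_eq_one : ∀ ⦃a b⦄, G.Adj a b → w a b + w b a = 1
  adj_of_ne_zero : ∀ ⦃a b⦄, w a b ≠ 0 → G.Adj a b

namespace IsFractionalOrientation

theorem add_eq_ite [DecidableRel G.Adj] (hw : G.IsFractionalOrientation w) (a b : V) :
    w a b + w b a = if G.Adj a b then 1 else 0 := by
  split_ifs with h
  · exact hw.add_eq_one h
  · have hab : w a b = 0 := by_contra fun h' ↦ h (hw.adj_of_ne_zero h')
    have hba : w b a = 0 := by_contra fun h' ↦ h (hw.adj_of_ne_zero h').symm
    rw [hab, hba, add_zero]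

theorem card_edgeFinset_eq_sum [Fintype V] [DecidableRel G.Adj]
    (hw : G.IsFractionalOrientation w) :
    (#G.edgeFinset : ℚ) = ∑ a, ∑ b, w a b := by
  have hswap : ∑ a, ∑ b, w b a = ∑ a, ∑ b, w a b := Finset.sum_comm
  have hdeg : ∑ a, ∑ b, (w a b + w b a) = ∑ a, (G.degree a : ℚ) := by
    simp only [hw.add_eq_ite, Finset.sum_boole, ← card_neighborFinset_eq_degree,
      neighborFinset_eq_filter]
  have htwice : ∑ a, (G.degree a : ℚ) = 2 * #G.edgeFinset := by
    exact_mod_cast G.sum_degrees_eq_twice_card_edges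
  simp only [Finset.sum_add_distrib, hswap] at hdeg
  linarith

theorem restrict (hw : G.IsFractionalOrientation w) (H : G.Subgraph) [DecidableRel H.Adj] :
    H.spanningCoe.IsFractionalOrientation (fun a b ↦ if H.Adj a b then w a b else 0) where
  nonneg a b := by split_ifs <;> simp [hw.nonneg]
  add_eq_one a b h := by
    simp only [Subgraph.spanningCoe_adj] at h
    simp [h, h.symm, hw.add_eq_one (H.adj_sub h)]
  adj_of_ne_zero a b h := by by_contra h'; exact h (if_neg h')

theorem ncard_edgeSet_eq_sum [Fintype V] (hw : G.IsFractionalOrientation w) (H : G.Subgraph)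
    [DecidableRel H.Adj] [DecidablePred (· ∈ H.verts)] :
    (H.edgeSet.ncard : ℚ) = ∑ a ∈ H.verts.toFinset, ∑ b, if H.Adj a b then w a b else 0 := by
  classical
  have hE : H.edgeSet = (H.spanningCoe.edgeFinset : Set (Sym2 V)) := by simp
  rw [hE, Set.ncard_coe_finset, (hw.restrict H).card_edgeFinset_eq_sum]
  refine (Finset.sum_subset (subset_univ _) fun a _ ha ↦ ?_).symm
  refine Finset.sum_eq_zero fun b _ ↦ if_neg fun h ↦ ?_
  simp only [Set.mem_toFinset] at ha
  exact ha (H.edge_vert h)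

theorem subDensity_le [Fintype V] (hw : G.IsFractionalOrientation w) {H : G.Subgraph}
    (hH : H.verts.Nonempty) {c : ℚ} (hload : ∀ a ∈ H.verts, ∑ b, w a b ≤ c) :
    subDensity H ≤ c := by
  classical
  have hpos : (0 : ℚ) < H.verts.ncard := by exact_mod_cast (Set.ncard_pos H.verts.toFinite).2 hH
  rw [subDensity, div_le_iff₀ hpos, hw.ncard_edgeSet_eq_sum, Set.ncard_eq_toFinset_card',
    mul_comm, ← nsmul_eq_mul]
  refine Finset.sum_le_card_nsmul _ _ _ fun a ha ↦ ?_
  calc ∑ b, (if H.Adj a b then w a b else 0) ≤ ∑ b, w a b :=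
        sum_le_sum fun b _ ↦ by split_ifs; exacts [le_rfl, hw.nonneg a b]
    _ ≤ c := hload a (Set.mem_toFinset.1 ha)

theorem subDensity_induce_eq [Fintype V] (hw : G.IsFractionalOrientation w) {S : Set V}
    (hS : S.Nonempty) {c : ℚ} (hload : ∀ a ∈ S, ∑ b, w a b = c)
    (hclosed : ∀ a ∈ S, ∀ b, w a b ≠ 0 → b ∈ S) :
    subDensity ((⊤ : G.Subgraph).induce S) = c := by
  classical
  have hpos : (0 : ℚ) < S.ncard := by exact_mod_cast (Set.ncard_pos S.toFinite).2 hS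
  have hrow : ∀ a ∈ ((⊤ : G.Subgraph).induce S).verts.toFinset,
      ∑ b, (if ((⊤ : G.Subgraph).induce S).Adj a b then w a b else 0) = c := by
    intro a ha
    replace ha : a ∈ S := Set.mem_toFinset.1 ha
    rw [← hload a ha]
    refine Finset.sum_congr rfl fun b _ ↦ ?_
    by_cases hab : w a b = 0
    · simp [hab]
    · exact if_pos ⟨ha, hclosed a ha b hab, hw.adj_of_ne_zero hab⟩
  rw [subDensity, hw.ncard_edgeSet_eq_sum, Finset.sum_congr rfl hrow, sum_const, nsmul_eq_mul,
    ← Set.ncard_eq_toFinset_card', Subgraph.induce_verts]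
  field_simp

theorem isMaxSubgraphDensity [Fintype V] (hw : G.IsFractionalOrientation w) {c : ℚ}
    (hle : ∀ a, ∑ b, w a b ≤ c) {S : Set V} (hS : S.Nonempty) (hload : ∀ a ∈ S, ∑ b, w a b = c)
    (hclosed : ∀ a ∈ S, ∀ b, w a b ≠ 0 → b ∈ S) : G.IsMaxSubgraphDensity c :=
  ⟨fun _ hH ↦ hw.subDensity_le hH fun a _ ↦ hle a, _, hS, hw.subDensity_induce_eq hS hload hclosed⟩

end IsFractionalOrientation
end SimpleGraph

/-- Shares on `G_r(u; u_1, …, u_s)`: a vertex of the part of size `r` carries `a` of its edge to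
the centre `u` and `b` of its edge to its `u_i`. -/
def blockWeight (r s : ℕ) (a b : ℚ) : GVert r s → GVert r s → ℚ
  | .inl _, .inr (.inr _) => 1 - a
  | .inr (.inr _), .inl _ => a
  | .inr (.inl i), .inr (.inr p) => if p.1 = i then 1 - b else 0
  | .inr (.inr p), .inr (.inl i) => if p.1 = i then b else 0
  | _, _ => 0

section BlockWeight

variable {r s : ℕ} {a b : ℚ}

theorem sum_blockWeight_center (x : Unit) :
    ∑ y, blockWeight r s a b (.inl x) y = s * r * (1 - a) := by
  simp [blockWeight, Fintype.sum_sum_type, mul_one_sub]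

theorem sum_blockWeight_spoke (i : Fin s) :
    ∑ y, blockWeight r s a b (.inr (.inl i)) y = r * (1 - b) := by
  simp [blockWeight, Fintype.sum_sum_type, Fintype.sum_prod_type, Finset.sum_comm (γ := Fin s),
    mul_one_sub]

theorem sum_blockWeight_leaf (p : Fin s × Fin r) :
    ∑ y, blockWeight r s a b (.inr (.inr p)) y = a + b := by
  simp [blockWeight, Fintype.sum_sum_type]

end BlockWeight

theorem sum_htV {t : ℕ} (f : HtV t → ℚ) :
    ∑ y, f y = ∑ y, f (.inl y) + ∑ y, f (.inr (.inl y)) + ∑ y, f (.inr (.inr y)) := by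
  rw [Fintype.sum_sum_type, Fintype.sum_sum_type (f := fun y ↦ f (.inr y)), add_assoc]

/-- Shares on `H_t`: block `i` uses `blockWeight` with `aᵢ, bᵢ`; on the edges from `u` to
`v, v_1, …, v_s` the second endpoint carries `g`, and the edges from `v` to the third block are
carried entirely by the third block. -/
structure HtWeights where
  (a₁ b₁ g a₂ b₂ a₃ b₃ : ℚ)

namespace HtWeights

def weight (P : HtWeights) (t : ℕ) : HtV t → HtV t → ℚ
  | .inl x, .inl y => blockWeight _ _ P.a₁ P.b₁ x y
  | .inr (.inl x), .inr (.inl y) => blockWeight _ _ P.a₂ P.b₂ x y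
  | .inr (.inr x), .inr (.inr y) => blockWeight _ _ P.a₃ P.b₃ x y
  | .inl (.inl _), .inr (.inl (.inl _)) => 1 - P.g
  | .inr (.inl (.inl _)), .inl (.inl _) => P.g
  | .inl (.inl _), .inr (.inl (.inr (.inl _))) => 1 - P.g
  | .inr (.inl (.inr (.inl _))), .inl (.inl _) => P.g
  | .inr (.inr (.inl _)), .inr (.inl (.inl _)) => 1
  | .inr (.inr (.inr (.inl _))), .inr (.inl (.inl _)) => 1
  | _, _ => 0

def Valid (P : HtWeights) : Prop :=
  P.a₁ ∈ Set.Icc 0 1 ∧ P.b₁ ∈ Set.Icc 0 1 ∧ P.g ∈ Set.Icc 0 1 ∧ P.a₂ ∈ Set.Icc 0 1 ∧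
    P.b₂ ∈ Set.Icc 0 1 ∧ P.a₃ ∈ Set.Icc 0 1 ∧ P.b₃ ∈ Set.Icc 0 1

variable (P : HtWeights) {t : ℕ}

theorem isFractionalOrientation_weight (hP : P.Valid) :
    (Ht t).IsFractionalOrientation (P.weight t) where
  nonneg a b := by
    obtain ⟨⟨h1, h1'⟩, ⟨h2, h2'⟩, ⟨h3, h3'⟩, ⟨h4, h4'⟩, ⟨h5, h5'⟩, ⟨h6, h6'⟩, ⟨h7, h7'⟩⟩ := hP
    obtain ((x | i | p) | (x | i | p) | (x | i | p)) := a <;>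
      obtain ((y | j | q) | (y | j | q) | (y | j | q)) := b <;>
      simp only [weight, blockWeight] <;> try split_ifs
    all_goals linarith
  add_eq_one a b h := by
    obtain ⟨-, h⟩ := h
    obtain ((x | i | p) | (x | i | p) | (x | i | p)) := a <;>
      obtain ((y | j | q) | (y | j | q) | (y | j | q)) := b <;>
      simp_all [weight, blockWeight, HtRel, GRel]
  adj_of_ne_zero a b h := by
    rw [Ht, SimpleGraph.fromRel_adj]
    obtain ((x | i | p) | (x | i | p) | (x | i | p)) := a <;>
      obtain ((y | j | q) | (y | j | q) | (y | j | q)) := b <;>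
      simp_all [weight, blockWeight, HtRel, GRel]

theorem sum_weight_u (x : Unit) :
    ∑ y, P.weight t (.inl (.inl x)) y =
      htr t * (t - 1 : ℕ) * (1 - P.a₁) + (hts t + 1) * (1 - P.g) := by
  rw [sum_htV]
  simp only [weight, sum_blockWeight_center]
  simp only [Fintype.sum_sum_type, univ_unique, PUnit.default_eq_unit, sum_sub_distrib, sum_const,
    card_singleton, one_smul, card_univ, Fintype.card_fin, nsmul_eq_mul, mul_one]
  ring

theorem sum_weight_uᵢ (i : Fin (htr t)) :
    ∑ y, P.weight t (.inl (.inr (.inl i))) y = (t - 1 : ℕ) * (1 - P.b₁) := by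
  rw [sum_htV]
  simp only [weight, sum_blockWeight_spoke]
  simp

theorem sum_weight_leaf₁ (p : Fin (htr t) × Fin (t - 1)) :
    ∑ y, P.weight t (.inl (.inr (.inr p))) y = P.a₁ + P.b₁ := by
  rw [sum_htV]
  simp only [weight, sum_blockWeight_leaf]
  simp

theorem sum_weight_v (x : Unit) :
    ∑ y, P.weight t (.inr (.inl (.inl x))) y = P.g + hts t * (hts t - 1 : ℕ) * (1 - P.a₂) := by
  rw [sum_htV]
  simp only [weight, sum_blockWeight_center]
  simp [Fintype.sum_sum_type]

theorem sum_weight_vᵢ (i : Fin (hts t)) :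
    ∑ y, P.weight t (.inr (.inl (.inr (.inl i)))) y = P.g + (hts t - 1 : ℕ) * (1 - P.b₂) := by
  rw [sum_htV]
  simp only [weight, sum_blockWeight_spoke]
  simp [Fintype.sum_sum_type]

theorem sum_weight_leaf₂ (p : Fin (hts t) × Fin (hts t - 1)) :
    ∑ y, P.weight t (.inr (.inl (.inr (.inr p)))) y = P.a₂ + P.b₂ := by
  rw [sum_htV]
  simp only [weight, sum_blockWeight_leaf]
  simp

theorem sum_weight_w (x : Unit) :
    ∑ y, P.weight t (.inr (.inr (.inl x))) y = 1 + (t - 2 : ℕ) * (htr t - 1 : ℕ) * (1 - P.a₃) := by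
  rw [sum_htV]
  simp only [weight, sum_blockWeight_center]
  simp [Fintype.sum_sum_type]

theorem sum_weight_wᵢ (i : Fin (t - 2)) :
    ∑ y, P.weight t (.inr (.inr (.inr (.inl i)))) y = 1 + (htr t - 1 : ℕ) * (1 - P.b₃) := by
  rw [sum_htV]
  simp only [weight, sum_blockWeight_spoke]
  simp [Fintype.sum_sum_type]

theorem sum_weight_leaf₃ (p : Fin (t - 2) × Fin (htr t - 1)) :
    ∑ y, P.weight t (.inr (.inr (.inr (.inr p)))) y = P.a₃ + P.b₃ := by
  rw [sum_htV]
  simp only [weight, sum_blockWeight_leaf]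
  simp

theorem weight_inl_inr_inr (x y) : P.weight t (.inl x) (.inr (.inr y)) = 0 := by
  obtain (x | i | p) := x <;> obtain (y | j | q) := y <;> rfl

theorem weight_inr_inl_inr_inr (x y) : P.weight t (.inr (.inl x)) (.inr (.inr y)) = 0 := by
  obtain (x | i | p) := x <;> obtain (y | j | q) := y <;> rfl

theorem weight_inl_inr (hg : P.g = 1) (x y) : P.weight t (.inl x) (.inr y) = 0 := by
  obtain (x | i | p) := x <;> obtain ((y | j | q) | (y | j | q)) := y <;> simp [weight, hg]

end HtWeights

theorem one_sub_div_mem_Icc {x y : ℚ} (hx : 0 ≤ x) (hxy : x ≤ y) :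
    1 - x / y ∈ Set.Icc (0 : ℚ) 1 :=
  ⟨by linarith [div_le_one_of_le₀ hxy (hx.trans hxy)], by linarith [div_nonneg hx (hx.trans hxy)]⟩

open HtWeights

section Even

variable (n : ℕ)

/- Here `t = 2n + 4`, so `r = n + 1` and `s = n + 2`; the first two blocks have
`3n² + 10n + 10` vertices and `6n² + 17n + 13` edges. -/
def evenWeights : HtWeights where
  a₁ := 1 - (6 * n + 8) / ((2 * n + 3) * (3 * n ^ 2 + 10 * n + 10))
  b₁ := 1 - (6 * n ^ 2 + 17 * n + 13) / ((2 * n + 3) * (3 * n ^ 2 + 10 * n + 10))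
  g := 1 - (3 * n + 5) / ((n + 3) * (3 * n ^ 2 + 10 * n + 10))
  a₂ := 1 - (3 * n + 7) / ((n + 3) * (3 * n ^ 2 + 10 * n + 10))
  b₂ := 1 - (n + 2) * (3 * n + 7) / ((n + 3) * (3 * n ^ 2 + 10 * n + 10))
  a₃ := 1
  b₃ := (3 * n ^ 2 + 7 * n + 3) / (3 * n ^ 2 + 10 * n + 10)

theorem evenWeights_valid : (evenWeights n).Valid := by
  have hn : (0 : ℚ) ≤ n := n.cast_nonneg
  refine ⟨one_sub_div_mem_Icc ?_ ?_, one_sub_div_mem_Icc ?_ ?_, one_sub_div_mem_Icc ?_ ?_,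
    one_sub_div_mem_Icc ?_ ?_, one_sub_div_mem_Icc ?_ ?_, ⟨zero_le_one, le_rfl⟩,
    div_nonneg ?_ ?_, div_le_one_of_le₀ ?_ ?_⟩ <;> nlinarith [pow_nonneg hn 2, pow_nonneg hn 3]

theorem htr_even : htr (2 * n + 4) = n + 1 := by unfold htr; omega

theorem hts_even : hts (2 * n + 4) = n + 2 := by unfold hts htr; omega

theorem eta_even : eta (2 * n + 4) = (6 * n ^ 2 + 17 * n + 13) / (3 * n ^ 2 + 10 * n + 10) := by
  rw [eta, if_pos ⟨n + 2, by ring⟩, div_eq_div_iff (by push_cast; nlinarith) (by positivity)]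
  push_cast
  ring

theorem sum_evenWeights_eq :
    ∀ a ∈ (Set.range (Sum.inr ∘ Sum.inr) : Set (HtV (2 * n + 4)))ᶜ,
      ∑ b, (evenWeights n).weight _ a b = eta (2 * n + 4) := by
  rintro ((x | i | p) | (x | i | p) | a) ha
  case inr.inr => exact absurd ⟨a, rfl⟩ ha
  all_goals
    simp only [sum_weight_u, sum_weight_uᵢ, sum_weight_leaf₁, sum_weight_v, sum_weight_vᵢ,
      sum_weight_leaf₂, htr_even, hts_even, evenWeights, eta_even]
    push_cast
    field_simp
    ring

theorem sum_evenWeights_le (a : HtV (2 * n + 4)) :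
    ∑ b, (evenWeights n).weight _ a b ≤ eta (2 * n + 4) := by
  obtain (a | a | (x | i | p)) := a
  · exact (sum_evenWeights_eq n _ (by simp)).le
  · exact (sum_evenWeights_eq n _ (by simp)).le
  all_goals
    simp only [sum_weight_w, sum_weight_wᵢ, sum_weight_leaf₃, htr_even, evenWeights, eta_even]
    push_cast
    field_simp
    nlinarith

theorem isMaxSubgraphDensity_Ht_even :
    (Ht (2 * n + 4)).IsMaxSubgraphDensity (eta (2 * n + 4)) := by
  refine ((evenWeights n).isFractionalOrientation_weight (evenWeights_valid n)).isMaxSubgraphDensity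
    (sum_evenWeights_le n) ⟨.inl (.inl ()), by simp⟩ (sum_evenWeights_eq n) ?_
  rintro (a | a | a) ha (b | b | b) hab
  · simp
  · simp
  · exact absurd (weight_inl_inr_inr _ a b) hab
  · simp
  · simp
  · exact absurd (weight_inr_inl_inr_inr _ a b) hab
  all_goals exact absurd ⟨a, rfl⟩ ha

end Even

section Odd

variable (n : ℕ)

/- Here `t = 2n + 5`, so `r = s = n + 2`; the first block has `2n² + 9n + 11` vertices and
`4(n + 2)²` edges. -/
def oddWeights : HtWeights where
  a₁ := 1 - 2 / (2 * n ^ 2 + 9 * n + 11)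
  b₁ := 1 - (2 * n + 4) / (2 * n ^ 2 + 9 * n + 11)
  g := 1
  a₂ := 1 - (2 * n + 5) / ((n + 2) * (2 * n ^ 2 + 9 * n + 11))
  b₂ := 1 - (2 * n + 5) / (2 * n ^ 2 + 9 * n + 11)
  a₃ := 1 - (2 * n + 5) / ((2 * n + 3) * (2 * n ^ 2 + 9 * n + 11))
  b₃ := 1 - (2 * n + 5) / (2 * n ^ 2 + 9 * n + 11)

theorem oddWeights_valid : (oddWeights n).Valid := by
  have hn : (0 : ℚ) ≤ n := n.cast_nonneg
  refine ⟨one_sub_div_mem_Icc ?_ ?_, one_sub_div_mem_Icc ?_ ?_, ⟨zero_le_one, le_rfl⟩,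
    one_sub_div_mem_Icc ?_ ?_, one_sub_div_mem_Icc ?_ ?_, one_sub_div_mem_Icc ?_ ?_,
    one_sub_div_mem_Icc ?_ ?_⟩ <;> nlinarith [pow_nonneg hn 2, pow_nonneg hn 3]

theorem htr_odd : htr (2 * n + 5) = n + 2 := by unfold htr; omega

theorem hts_odd : hts (2 * n + 5) = n + 2 := by unfold hts htr; omega

theorem eta_odd : eta (2 * n + 5) = 4 * (n + 2) ^ 2 / (2 * n ^ 2 + 9 * n + 11) := by
  have hodd : ¬ Even (2 * n + 5) := by rw [Nat.not_even_iff_odd]; exact ⟨n + 2, by ring⟩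
  rw [eta, if_neg hodd, div_eq_div_iff (by push_cast; nlinarith) (by positivity)]
  push_cast
  ring

theorem sum_oddWeights_eq :
    ∀ a ∈ (Set.range Sum.inl : Set (HtV (2 * n + 5))),
      ∑ b, (oddWeights n).weight _ a b = eta (2 * n + 5) := by
  rintro _ ⟨x | i | p, rfl⟩
  all_goals
    simp only [sum_weight_u, sum_weight_uᵢ, sum_weight_leaf₁, htr_odd, hts_odd,
      oddWeights, eta_odd]
    push_cast
    field_simp
    ring

theorem sum_oddWeights_le (a : HtV (2 * n + 5)) :
    ∑ b, (oddWeights n).weight _ a b ≤ eta (2 * n + 5) := by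
  obtain (a | (x | i | p) | (x | i | p)) := a
  · exact (sum_oddWeights_eq n _ ⟨a, rfl⟩).le
  all_goals
    simp only [sum_weight_v, sum_weight_vᵢ, sum_weight_leaf₂, sum_weight_w, sum_weight_wᵢ,
      sum_weight_leaf₃, htr_odd, hts_odd, oddWeights, eta_odd]
    push_cast
    field_simp
    nlinarith

theorem isMaxSubgraphDensity_Ht_odd :
    (Ht (2 * n + 5)).IsMaxSubgraphDensity (eta (2 * n + 5)) := by
  refine ((oddWeights n).isFractionalOrientation_weight (oddWeights_valid n)).isMaxSubgraphDensity
    (sum_oddWeights_le n) ⟨.inl (.inl ()), Set.mem_range_self _⟩ (sum_oddWeights_eq n) ?_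
  rintro _ ⟨a, rfl⟩ (b | b) hab
  · exact ⟨b, rfl⟩
  · exact absurd (weight_inl_inr _ rfl a b) hab

end Odd

theorem stmt_4 (t : ℕ) (ht : 4 ≤ t) :
    (∀ H : (Ht t).Subgraph, H.verts.Nonempty → subDensity H ≤ eta t) ∧
    (∃ H : (Ht t).Subgraph, H.verts.Nonempty ∧ subDensity H = eta t) := by
  obtain ⟨n, rfl | rfl⟩ : ∃ n, t = 2 * n + 4 ∨ t = 2 * n + 5 := ⟨(t - 4) / 2, by omega⟩
  · exact isMaxSubgraphDensity_Ht_even n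
  · exact isMaxSubgraphDensity_Ht_odd n
end

section
/- For every integer t ≥ 4, the graph H_t has no nonempty subgraph of minimum degree greater than 2; that is, every nonempty subgraph of H_t contains a vertex of degree at most 2. -/
def U1 (t : ℕ) : HtV t := Sum.inl (Sum.inl ())
def U2 (t : ℕ) (i : Fin (htr t)) : HtV t := Sum.inl (Sum.inr (Sum.inl i))
def C1 (t : ℕ) (i : Fin (htr t)) (j : Fin (t-1)) : HtV t := Sum.inl (Sum.inr (Sum.inr (i,j)))
def V1 (t : ℕ) : HtV t := Sum.inr (Sum.inl (Sum.inl ()))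
def V2 (t : ℕ) (i : Fin (hts t)) : HtV t := Sum.inr (Sum.inl (Sum.inr (Sum.inl i)))
def C2 (t : ℕ) (i : Fin (hts t)) (j : Fin (hts t - 1)) : HtV t :=
  Sum.inr (Sum.inl (Sum.inr (Sum.inr (i,j))))
def W1 (t : ℕ) : HtV t := Sum.inr (Sum.inr (Sum.inl ()))
def W2 (t : ℕ) (i : Fin (t-2)) : HtV t := Sum.inr (Sum.inr (Sum.inr (Sum.inl i)))
def C3 (t : ℕ) (i : Fin (t-2)) (j : Fin (htr t - 1)) : HtV t :=
  Sum.inr (Sum.inr (Sum.inr (Sum.inr (i,j))))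

lemma ht_adj_elim {t} {x y : HtV t} (h : (Ht t).Adj x y) : HtRel t x y ∨ HtRel t y x :=
  ((SimpleGraph.fromRel_adj _ _ _).1 h).2

section Nbr
variable {t : ℕ}

lemma nbr_C1 {i j} {y : HtV t} (h : (Ht t).Adj (C1 t i j) y) : y = U1 t ∨ y = U2 t i := by
  have h' := ht_adj_elim h
  rcases y with (⟨⟩|i'|⟨i',j'⟩)|((⟨⟩|i'|⟨i',j'⟩)|(⟨⟩|i'|⟨i',j'⟩)) <;>
    simp_all [HtRel, GRel, U1, U2, C1]

lemma nbr_C2 {i j} {y : HtV t} (h : (Ht t).Adj (C2 t i j) y) : y = V1 t ∨ y = V2 t i := by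
  have h' := ht_adj_elim h
  rcases y with (⟨⟩|i'|⟨i',j'⟩)|((⟨⟩|i'|⟨i',j'⟩)|(⟨⟩|i'|⟨i',j'⟩)) <;>
    simp_all [HtRel, GRel, V1, V2, C2]

lemma nbr_C3 {i j} {y : HtV t} (h : (Ht t).Adj (C3 t i j) y) : y = W1 t ∨ y = W2 t i := by
  have h' := ht_adj_elim h
  rcases y with (⟨⟩|i'|⟨i',j'⟩)|((⟨⟩|i'|⟨i',j'⟩)|(⟨⟩|i'|⟨i',j'⟩)) <;>
    simp_all [HtRel, GRel, W1, W2, C3]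

lemma nbr_U2 {i} {y : HtV t} (h : (Ht t).Adj (U2 t i) y) : ∃ j, y = C1 t i j := by
  have h' := ht_adj_elim h
  rcases y with (⟨⟩|i'|⟨i',j'⟩)|((⟨⟩|i'|⟨i',j'⟩)|(⟨⟩|i'|⟨i',j'⟩)) <;>
    simp_all [HtRel, GRel, U2, C1]

lemma nbr_V2 {i} {y : HtV t} (h : (Ht t).Adj (V2 t i) y) : y = U1 t ∨ ∃ j, y = C2 t i j := by
  have h' := ht_adj_elim h
  rcases y with (⟨⟩|i'|⟨i',j'⟩)|((⟨⟩|i'|⟨i',j'⟩)|(⟨⟩|i'|⟨i',j'⟩)) <;>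
    simp_all [HtRel, GRel, U1, V2, C2]

lemma nbr_W1 {y : HtV t} (h : (Ht t).Adj (W1 t) y) : y = V1 t ∨ ∃ i j, y = C3 t i j := by
  have h' := ht_adj_elim h
  rcases y with (⟨⟩|i'|⟨i',j'⟩)|((⟨⟩|i'|⟨i',j'⟩)|(⟨⟩|i'|⟨i',j'⟩)) <;>
    simp_all [HtRel, GRel, V1, W1, C3]

lemma nbr_W2 {i} {y : HtV t} (h : (Ht t).Adj (W2 t i) y) : y = V1 t ∨ ∃ j, y = C3 t i j := by
  have h' := ht_adj_elim h
  rcases y with (⟨⟩|i'|⟨i',j'⟩)|((⟨⟩|i'|⟨i',j'⟩)|(⟨⟩|i'|⟨i',j'⟩)) <;>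
    simp_all [HtRel, GRel, V1, W2, C3]

lemma nbr_U1 {y : HtV t} (h : (Ht t).Adj (U1 t) y) :
    y = V1 t ∨ (∃ i, y = V2 t i) ∨ (∃ i j, y = C1 t i j) := by
  have h' := ht_adj_elim h
  rcases y with (⟨⟩|i'|⟨i',j'⟩)|((⟨⟩|i'|⟨i',j'⟩)|(⟨⟩|i'|⟨i',j'⟩)) <;>
    simp_all [HtRel, GRel, U1, V1, V2, C1]

lemma nbr_V1 {y : HtV t} (h : (Ht t).Adj (V1 t) y) :
    y = U1 t ∨ y = W1 t ∨ (∃ i, y = W2 t i) ∨ (∃ i j, y = C2 t i j) := by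
  have h' := ht_adj_elim h
  rcases y with (⟨⟩|i'|⟨i',j'⟩)|((⟨⟩|i'|⟨i',j'⟩)|(⟨⟩|i'|⟨i',j'⟩)) <;>
    simp_all [HtRel, GRel, U1, V1, W1, W2, C2]

end Nbr

lemma pair_bound {α} {s : Set α} {a b : α} (h : s ⊆ {a, b}) : s.ncard ≤ 2 := by
  have h1 : s.ncard ≤ ({a, b} : Set α).ncard :=
    Set.ncard_le_ncard h ((Set.finite_singleton b).insert a)
  have h2 : ({a, b} : Set α).ncard ≤ 2 := by
    simpa using Set.ncard_insert_le a ({b} : Set α)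
  omega

lemma single_bound {α} {s : Set α} {a : α} (h : s ⊆ {a}) : s.ncard ≤ 2 := by
  have h1 := Set.ncard_le_ncard h (Set.finite_singleton a)
  simp [Set.ncard_singleton] at h1
  omega

section Main
variable {t : ℕ} {H : (Ht t).Subgraph}

lemma goal_C1 (i j) (hm : C1 t i j ∈ H.verts) :
    ∃ v ∈ H.verts, (H.neighborSet v).ncard ≤ 2 := by
  refine ⟨_, hm, pair_bound (a := U1 t) (b := U2 t i) fun y hy => ?_⟩
  rcases nbr_C1 (H.adj_sub hy) with rfl | rfl <;> simp

lemma goal_C2 (i j) (hm : C2 t i j ∈ H.verts) :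
    ∃ v ∈ H.verts, (H.neighborSet v).ncard ≤ 2 := by
  refine ⟨_, hm, pair_bound (a := V1 t) (b := V2 t i) fun y hy => ?_⟩
  rcases nbr_C2 (H.adj_sub hy) with rfl | rfl <;> simp

lemma goal_C3 (i j) (hm : C3 t i j ∈ H.verts) :
    ∃ v ∈ H.verts, (H.neighborSet v).ncard ≤ 2 := by
  refine ⟨_, hm, pair_bound (a := W1 t) (b := W2 t i) fun y hy => ?_⟩
  rcases nbr_C3 (H.adj_sub hy) with rfl | rfl <;> simp

lemma goal_U2 (i) (hm : U2 t i ∈ H.verts) :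
    ∃ v ∈ H.verts, (H.neighborSet v).ncard ≤ 2 := by
  by_cases hn : (H.neighborSet (U2 t i)).Nonempty
  · obtain ⟨y, hy⟩ := hn
    obtain ⟨j, rfl⟩ := nbr_U2 (H.adj_sub hy)
    exact goal_C1 i j (H.edge_vert hy.symm)
  · exact ⟨_, hm, by simp [Set.not_nonempty_iff_eq_empty.1 hn]⟩

lemma goal_V2 (i) (hm : V2 t i ∈ H.verts) :
    ∃ v ∈ H.verts, (H.neighborSet v).ncard ≤ 2 := by
  by_cases hcl : ∃ j, C2 t i j ∈ H.neighborSet (V2 t i)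
  · obtain ⟨j, hy⟩ := hcl
    exact goal_C2 i j (H.edge_vert hy.symm)
  · refine ⟨_, hm, single_bound (a := U1 t) fun y hy => ?_⟩
    rcases nbr_V2 (H.adj_sub hy) with rfl | ⟨j, rfl⟩
    · simp
    · exact absurd ⟨j, hy⟩ hcl

lemma goal_W1 (hm : W1 t ∈ H.verts) :
    ∃ v ∈ H.verts, (H.neighborSet v).ncard ≤ 2 := by
  by_cases hcl : ∃ i j, C3 t i j ∈ H.neighborSet (W1 t)
  · obtain ⟨i, j, hy⟩ := hcl
    exact goal_C3 i j (H.edge_vert hy.symm)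
  · refine ⟨_, hm, single_bound (a := V1 t) fun y hy => ?_⟩
    rcases nbr_W1 (H.adj_sub hy) with rfl | ⟨i, j, rfl⟩
    · simp
    · exact absurd ⟨i, j, hy⟩ hcl

lemma goal_W2 (i) (hm : W2 t i ∈ H.verts) :
    ∃ v ∈ H.verts, (H.neighborSet v).ncard ≤ 2 := by
  by_cases hcl : ∃ j, C3 t i j ∈ H.neighborSet (W2 t i)
  · obtain ⟨j, hy⟩ := hcl
    exact goal_C3 i j (H.edge_vert hy.symm)
  · refine ⟨_, hm, single_bound (a := V1 t) fun y hy => ?_⟩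
    rcases nbr_W2 (H.adj_sub hy) with rfl | ⟨j, rfl⟩
    · simp
    · exact absurd ⟨j, hy⟩ hcl

lemma goal_U1 (hm : U1 t ∈ H.verts) :
    ∃ v ∈ H.verts, (H.neighborSet v).ncard ≤ 2 := by
  by_cases hcl : ∃ i j, C1 t i j ∈ H.neighborSet (U1 t)
  · obtain ⟨i, j, hy⟩ := hcl
    exact goal_C1 i j (H.edge_vert hy.symm)
  by_cases hv2 : ∃ i, V2 t i ∈ H.neighborSet (U1 t)
  · obtain ⟨i, hy⟩ := hv2
    exact goal_V2 i (H.edge_vert hy.symm)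
  refine ⟨_, hm, single_bound (a := V1 t) fun y hy => ?_⟩
  rcases nbr_U1 (H.adj_sub hy) with rfl | ⟨i, rfl⟩ | ⟨i, j, rfl⟩
  · simp
  · exact absurd ⟨i, hy⟩ hv2
  · exact absurd ⟨i, j, hy⟩ hcl

lemma goal_V1 (hm : V1 t ∈ H.verts) :
    ∃ v ∈ H.verts, (H.neighborSet v).ncard ≤ 2 := by
  by_cases hcl : ∃ i j, C2 t i j ∈ H.neighborSet (V1 t)
  · obtain ⟨i, j, hy⟩ := hcl
    exact goal_C2 i j (H.edge_vert hy.symm)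
  by_cases hw1 : W1 t ∈ H.neighborSet (V1 t)
  · exact goal_W1 (H.edge_vert hw1.symm)
  by_cases hw2 : ∃ i, W2 t i ∈ H.neighborSet (V1 t)
  · obtain ⟨i, hy⟩ := hw2
    exact goal_W2 i (H.edge_vert hy.symm)
  refine ⟨_, hm, single_bound (a := U1 t) fun y hy => ?_⟩
  rcases nbr_V1 (H.adj_sub hy) with rfl | rfl | ⟨i, rfl⟩ | ⟨i, j, rfl⟩
  · simp
  · exact absurd hy hw1
  · exact absurd ⟨i, hy⟩ hw2
  · exact absurd ⟨i, j, hy⟩ hcl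

end Main

theorem stmt_5 (t : ℕ) (ht : 4 ≤ t) (H : (Ht t).Subgraph) (hne : H.verts.Nonempty) :
    ∃ v ∈ H.verts, (H.neighborSet v).ncard ≤ 2 := by
  obtain ⟨x, hx⟩ := hne
  rcases x with (⟨⟩|i|⟨i,j⟩)|((⟨⟩|i|⟨i,j⟩)|(⟨⟩|i|⟨i,j⟩))
  · exact goal_U1 hx
  · exact goal_U2 i hx
  · exact goal_C1 i j hx
  · exact goal_V1 hx
  · exact goal_V2 i hx
  · exact goal_C2 i j hx
  · exact goal_W1 hx
  · exact goal_W2 i hx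
  · exact goal_C3 i j hx
end

section
/- Let t ≥ 4 be an integer and let H be a nonempty subgraph of H_t with d(H) = m(H_t) and, among all such subgraphs, with the minimum possible number of vertices. Then the minimum degree of H equals 2. -/
namespace SimpleGraph

variable {V : Type*} {G : SimpleGraph V}

theorem Walk.IsCycle.subDensity_toSubgraph {u : V} {p : G.Walk u u} (hp : p.IsCycle) :
    subDensity p.toSubgraph = 1 := by
  classical
  have hedges : p.toSubgraph.edgeSet.ncard = p.length := by
    rw [Walk.edgeSet_toSubgraph, Walk.edgeSet, ← List.coe_toFinset, Set.ncard_coe_finset,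
      List.toFinset_card_of_nodup hp.edges_nodup, Walk.length_edges]
  have hverts : p.toSubgraph.verts.ncard = p.length := by
    have hsupp : {w | w ∈ p.support} = {w | w ∈ p.support.tail} := by
      ext w
      rw [Set.mem_ofPred_eq, Set.mem_ofPred_eq, Walk.mem_support_iff]
      exact or_iff_right_of_imp fun h => h ▸ Walk.end_mem_tail_support hp.not_nil
    rw [Walk.verts_toSubgraph, hsupp, ← List.coe_toFinset, Set.ncard_coe_finset,
      List.toFinset_card_of_nodup hp.support_nodup, List.length_tail, Walk.length_support,
      Nat.add_sub_cancel]
  have hpos : (p.length : ℚ) ≠ 0 := by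
    exact_mod_cast (hp.three_le_length.trans_lt' (by norm_num)).ne'
  rw [subDensity, hedges, hverts, div_self hpos]

namespace Subgraph

theorem edgeSet_deleteVerts_singleton (H : G.Subgraph) (v : V) :
    (H.deleteVerts {v}).edgeSet = H.edgeSet \ H.spanningCoe.incidenceSet v := by
  refine Set.ext (Sym2.ind fun a b => ?_)
  simp only [Subgraph.mem_edgeSet, Subgraph.deleteVerts_adj, Set.mem_sdiff,
    mk'_mem_incidenceSet_iff, spanningCoe_adj, Set.mem_singleton_iff]
  constructor
  · rintro ⟨-, hav, -, hbv, hab⟩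
    exact ⟨hab, fun ⟨_, h⟩ => h.elim (fun h => hav h.symm) (fun h => hbv h.symm)⟩
  · rintro ⟨hab, h⟩
    exact ⟨hab.fst_mem, fun hav => h ⟨hab, Or.inl hav.symm⟩, hab.snd_mem,
      fun hbv => h ⟨hab, Or.inr hbv.symm⟩, hab⟩

theorem ncard_edgeSet_deleteVerts_singleton_add [Finite V] (H : G.Subgraph) (v : V) :
    (H.deleteVerts {v}).edgeSet.ncard + (H.neighborSet v).ncard = H.edgeSet.ncard := by
  have hinc : (H.spanningCoe.incidenceSet v).ncard = (H.neighborSet v).ncard := by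
    rw [← Nat.card_coe_set_eq, ← Nat.card_coe_set_eq]
    classical
    exact Nat.card_congr (H.spanningCoe.incidenceSetEquivNeighborSet v)
  rw [edgeSet_deleteVerts_singleton, ← hinc, ← edgeSet_spanningCoe]
  exact Set.ncard_sdiff_add_ncard_of_subset (incidenceSet_subset _ _) (Set.toFinite _)

theorem two_le_ncard_verts_of_pos_subDensity [Finite V] {H : G.Subgraph}
    (hH : 0 < subDensity H) : 2 ≤ H.verts.ncard := by
  obtain ⟨e, he⟩ : H.edgeSet.Nonempty := by
    refine Set.nonempty_of_ncard_ne_zero fun h => ?_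
    rw [subDensity, h, Nat.cast_zero, zero_div] at hH
    exact hH.false
  induction e using Sym2.ind with
  | h a b => exact (Set.one_lt_ncard_iff).2 ⟨a, b, he.fst_mem, he.snd_mem, he.ne⟩

theorem subDensity_le_subDensity_deleteVerts_singleton [Finite V] (H : G.Subgraph) {v : V}
    (hv : v ∈ H.verts) (hcard : 2 ≤ H.verts.ncard)
    (hdeg : ((H.neighborSet v).ncard : ℚ) ≤ subDensity H) :
    subDensity H ≤ subDensity (H.deleteVerts {v}) := by
  have hverts : ((H.deleteVerts {v}).verts.ncard : ℚ) = H.verts.ncard - 1 := by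
    rw [deleteVerts_verts, Set.ncard_sdiff_singleton_of_mem hv, Nat.cast_sub (by omega),
      Nat.cast_one]
  have hedges : ((H.deleteVerts {v}).edgeSet.ncard : ℚ) =
      H.edgeSet.ncard - (H.neighborSet v).ncard := by
    rw [← H.ncard_edgeSet_deleteVerts_singleton_add v]
    push_cast
    ring
  have hn : (2 : ℚ) ≤ H.verts.ncard := by exact_mod_cast hcard
  rw [subDensity, le_div_iff₀ (by linarith)] at hdeg
  rw [subDensity, subDensity, hverts, hedges, div_le_div_iff₀ (by linarith) (by linarith)]
  linarith

def IsDensest (H : G.Subgraph) : Prop :=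
  ∀ H' : G.Subgraph, H'.verts.Nonempty → subDensity H' ≤ subDensity H

theorem IsDensest.two_le_ncard_neighborSet [Finite V] {H : G.Subgraph} (hH : H.IsDensest)
    (hmin : ∀ H' : G.Subgraph, H'.verts.Nonempty → H'.IsDensest →
      H.verts.ncard ≤ H'.verts.ncard)
    (hd : 1 ≤ subDensity H) {v : V} (hv : v ∈ H.verts) : 2 ≤ (H.neighborSet v).ncard := by
  by_contra! hdeg
  have hcard := two_le_ncard_verts_of_pos_subDensity (hd.trans_lt' one_pos)
  have hdel_card : (H.deleteVerts {v}).verts.ncard = H.verts.ncard - 1 := by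
    rw [deleteVerts_verts, Set.ncard_sdiff_singleton_of_mem hv]
  have hdel_ne : (H.deleteVerts {v}).verts.Nonempty :=
    Set.nonempty_of_ncard_ne_zero (by omega)
  have hdel_densest : (H.deleteVerts {v}).IsDensest := fun H' hH' =>
    (hH H' hH').trans <| H.subDensity_le_subDensity_deleteVerts_singleton hv hcard <|
      hd.trans' (by exact_mod_cast Nat.le_of_lt_succ hdeg)
  have := hmin _ hdel_ne hdel_densest
  omega

theorem exists_ncard_neighborSet_le [Finite V] {β : Type*} [LinearOrder β] (f : V → β)
    {k : ℕ} (hf : ∀ x, {y | G.Adj x y ∧ f x ≤ f y}.ncard ≤ k) (H : G.Subgraph)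
    (hne : H.verts.Nonempty) : ∃ x ∈ H.verts, (H.neighborSet x).ncard ≤ k := by
  obtain ⟨x, hx, hmin⟩ := Set.exists_min_image H.verts f (Set.toFinite _) hne
  refine ⟨x, hx, le_trans (Set.ncard_le_ncard ?_ (Set.toFinite _)) (hf x)⟩
  exact fun y hy => ⟨hy.adj_sub, hmin y hy.snd_mem⟩

end Subgraph

end SimpleGraph

theorem Ht_exists_isCycle {t : ℕ} (ht : 3 ≤ t) :
    ∃ (x : HtV t) (p : (Ht t).Walk x x), p.IsCycle := by
  have hr : 0 < htr t := by unfold htr; omega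
  let i : Fin (htr t) := ⟨0, hr⟩
  let u : HtV t := Sum.inl (Sum.inl ())
  let ui : HtV t := Sum.inl (Sum.inr (Sum.inl i))
  let c (j : Fin (t - 1)) : HtV t := Sum.inl (Sum.inr (Sum.inr (i, j)))
  have hu (j) : (Ht t).Adj u (c j) := by simp [u, c, Ht, HtRel, GRel]
  have hui (j) : (Ht t).Adj ui (c j) := by simp [ui, c, Ht, HtRel, GRel]
  let p : (Ht t).Walk u u :=
    .cons (hu ⟨0, by omega⟩) <| .cons (hui ⟨0, by omega⟩).symm <|
      .cons (hui ⟨1, by omega⟩) <| .cons (hu ⟨1, by omega⟩).symm .nil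
  exact ⟨u, p, by simp [p, u, ui, c, SimpleGraph.Walk.cons_isCycle_iff]⟩

/-- A degeneracy order of `H_t`: the vertices of degree 2 in the copies of `K_{2,r}` come first,
then the `u_i`, `v_i`, `w_i`, then `u`, `v`, `w`. -/
def htRank {t : ℕ} : HtV t → ℕ
  | Sum.inl (Sum.inl _) => 2
  | Sum.inr (Sum.inl (Sum.inl _)) => 3
  | Sum.inr (Sum.inr (Sum.inl _)) => 4
  | Sum.inl (Sum.inr (Sum.inl _)) => 1
  | Sum.inr (Sum.inl (Sum.inr (Sum.inl _))) => 1
  | Sum.inr (Sum.inr (Sum.inr (Sum.inl _))) => 1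
  | _ => 0

/-- The neighbours of `x` of rank at least `htRank x`; `(x, x)` when there are none. -/
def htRankUpper {t : ℕ} : HtV t → HtV t × HtV t
  | Sum.inl (Sum.inl _) =>
    (Sum.inr (Sum.inl (Sum.inl ())), Sum.inr (Sum.inl (Sum.inl ())))
  | Sum.inl (Sum.inr (Sum.inr (i, _))) =>
    (Sum.inl (Sum.inl ()), Sum.inl (Sum.inr (Sum.inl i)))
  | Sum.inr (Sum.inl (Sum.inl _)) =>
    (Sum.inr (Sum.inr (Sum.inl ())), Sum.inr (Sum.inr (Sum.inl ())))
  | Sum.inr (Sum.inl (Sum.inr (Sum.inl _))) => (Sum.inl (Sum.inl ()), Sum.inl (Sum.inl ()))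
  | Sum.inr (Sum.inl (Sum.inr (Sum.inr (i, _)))) =>
    (Sum.inr (Sum.inl (Sum.inl ())), Sum.inr (Sum.inl (Sum.inr (Sum.inl i))))
  | Sum.inr (Sum.inr (Sum.inr (Sum.inl _))) =>
    (Sum.inr (Sum.inl (Sum.inl ())), Sum.inr (Sum.inl (Sum.inl ())))
  | Sum.inr (Sum.inr (Sum.inr (Sum.inr (i, _)))) =>
    (Sum.inr (Sum.inr (Sum.inl ())), Sum.inr (Sum.inr (Sum.inr (Sum.inl i))))
  | x => (x, x)

theorem Ht_eq_htRankUpper_of_adj {t : ℕ} {x y : HtV t} (hxy : (Ht t).Adj x y)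
    (hrank : htRank x ≤ htRank y) : y = (htRankUpper x).1 ∨ y = (htRankUpper x).2 := by
  rw [Ht, SimpleGraph.fromRel_adj] at hxy
  rcases x with (⟨⟩|_|⟨_, _⟩) | (⟨⟩|_|⟨_, _⟩) | (⟨⟩|_|⟨_, _⟩) <;>
    rcases y with (⟨⟩|_|⟨_, _⟩) | (⟨⟩|_|⟨_, _⟩) | (⟨⟩|_|⟨_, _⟩) <;>
    simp_all [HtRel, GRel, htRank, htRankUpper]

theorem Ht_ncard_adj_htRank_le {t : ℕ} (x : HtV t) :
    {y | (Ht t).Adj x y ∧ htRank x ≤ htRank y}.ncard ≤ 2 :=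
  calc _ ≤ ({(htRankUpper x).1, (htRankUpper x).2} : Set (HtV t)).ncard :=
        Set.ncard_le_ncard fun _ hy => Ht_eq_htRankUpper_of_adj hy.1 hy.2
    _ ≤ ({(htRankUpper x).2} : Set (HtV t)).ncard + 1 := Set.ncard_insert_le _ _
    _ = 2 := by rw [Set.ncard_singleton]

theorem stmt_6 (t : ℕ) (ht : 4 ≤ t) (H : (Ht t).Subgraph) (hne : H.verts.Nonempty)
    (hmax : ∀ H' : (Ht t).Subgraph, H'.verts.Nonempty → subDensity H' ≤ subDensity H)
    (hmin : ∀ H' : (Ht t).Subgraph, H'.verts.Nonempty →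
      (∀ H'' : (Ht t).Subgraph, H''.verts.Nonempty → subDensity H'' ≤ subDensity H') →
      H.verts.ncard ≤ H'.verts.ncard) :
    (∀ v ∈ H.verts, 2 ≤ (H.neighborSet v).ncard) ∧
    (∃ v ∈ H.verts, (H.neighborSet v).ncard = 2) := by
  obtain ⟨x, p, hp⟩ := Ht_exists_isCycle (by omega : 3 ≤ t)
  have hdensity : 1 ≤ subDensity H :=
    hp.subDensity_toSubgraph ▸ hmax _ ⟨x, p.start_mem_verts_toSubgraph⟩
  have hdeg (v) (hv : v ∈ H.verts) : 2 ≤ (H.neighborSet v).ncard :=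
    SimpleGraph.Subgraph.IsDensest.two_le_ncard_neighborSet hmax hmin hdensity hv
  obtain ⟨v, hv, hle⟩ := H.exists_ncard_neighborSet_le htRank Ht_ncard_adj_htRank_le hne
  exact ⟨hdeg, v, hv, le_antisymm hle (hdeg v hv)⟩
end

section
/- Let t ≥ 4 be an integer and let H be a nonempty subgraph of H_t with d(H) = m(H_t) and, among all such subgraphs, with the minimum possible number of vertices. Then for every two distinct vertices x, y ∈ V(H), every common neighbor of x and y in H_t belongs to V(H); that is, N_{H_t}(x) ∩ N_{H_t}(y) ⊆ V(H). -/
/-!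
Rank `v` lowest, then `u` and `w`, then the `u_i`, `v_i`, `w_i`, then all remaining vertices.
Every vertex of `H_t` has at most two neighbours of lower rank, so a nonempty subgraph with `n`
vertices has at most `2n - 2 < 2n` edges. If a vertex `z ∉ V(H)` were adjacent to distinct `x, y ∈ V(H)`, adding `z` together with
the edges `xz`, `yz` would raise the density from `e/n` to `(e + 2)/(n + 1) > e/n`, contradicting
`d(H) = m(H_t)`.
-/

namespace SimpleGraph

variable {V : Type*} {G : SimpleGraph V}

/-- Charge each edge of `H` to its endpoint of larger `f`-value: a vertex of `H` minimising `f`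
is charged nothing, every other one at most `k`. -/
theorem Subgraph.ncard_edgeSet_add_le [Finite V] (f : V → ℕ) {k : ℕ}
    (hf : ∀ ⦃a b⦄, G.Adj a b → f a ≠ f b)
    (hk : ∀ v, {w | G.Adj v w ∧ f w < f v}.ncard ≤ k)
    (H : G.Subgraph) (hne : H.verts.Nonempty) :
    H.edgeSet.ncard + k ≤ k * H.verts.ncard := by
  classical
  obtain ⟨v₀, hv₀, hmin⟩ := Set.exists_min_image H.verts f (Set.toFinite _) hne
  set T := (Set.toFinite (H.verts \ {v₀})).toFinset
  have hsub : H.edgeSet ⊆ ⋃ v ∈ T, (fun w => s(v, w)) '' {w | G.Adj v w ∧ f w < f v} := by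
    intro e he
    induction e using Sym2.ind with | h a b => ?_
    wlog hlt : f b < f a generalizing a b
    · rw [Sym2.eq_swap] at he ⊢
      exact this b a he ((hf (H.adj_sub he)).symm.lt_of_le (not_lt.1 hlt))
    have hab : H.Adj a b := he
    refine Set.mem_biUnion (x := a) ?_ ⟨b, ⟨H.adj_sub hab, hlt⟩, rfl⟩
    rw [Finset.mem_coe, Set.Finite.mem_toFinset]
    exact ⟨H.edge_vert hab, fun ha => (hmin b (H.edge_vert hab.symm)).not_gt (ha ▸ hlt)⟩
  have hT : T.card + 1 = H.verts.ncard := by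
    rw [← Set.ncard_eq_toFinset_card _, Set.ncard_sdiff_singleton_add_one hv₀]
  calc H.edgeSet.ncard + k
      ≤ ∑ v ∈ T, ((fun w => s(v, w)) '' {w | G.Adj v w ∧ f w < f v}).ncard + k := by
        gcongr
        exact (Set.ncard_le_ncard hsub).trans (T.set_ncard_biUnion_le _)
    _ ≤ T.card * k + k := by
        gcongr
        simpa using Finset.sum_le_card_nsmul _ _ _ fun v _ =>
          (Set.ncard_image_le (Set.toFinite _)).trans (hk v)
    _ = k * H.verts.ncard := by rw [← hT]; ring

theorem Subgraph.exists_insert_vertex_of_two_adj [Finite V] (H : G.Subgraph) {x y z : V}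
    (hx : x ∈ H.verts) (hy : y ∈ H.verts) (hxy : x ≠ y) (hz : z ∉ H.verts)
    (hxz : G.Adj x z) (hyz : G.Adj y z) :
    ∃ H' : G.Subgraph, z ∈ H'.verts ∧ H'.verts.ncard = H.verts.ncard + 1 ∧
      H'.edgeSet.ncard = H.edgeSet.ncard + 2 := by
  refine ⟨H ⊔ G.subgraphOfAdj hxz ⊔ G.subgraphOfAdj hyz, by simp, ?_, ?_⟩
  · have : (H ⊔ G.subgraphOfAdj hxz ⊔ G.subgraphOfAdj hyz).verts = insert z H.verts := by
      ext; simp only [Subgraph.verts_sup, subgraphOfAdj_verts]; aesop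
    rw [this, Set.ncard_insert_of_notMem hz]
  · have hnew : ∀ {a}, s(a, z) ∉ H.edgeSet := fun h => hz (H.edge_vert (H.mem_edgeSet.1 h).symm)
    have hne : s(x, z) ≠ s(y, z) := by simp [hxy, hyz.ne.symm]
    rw [Subgraph.edgeSet_sup, Subgraph.edgeSet_sup, edgeSet_subgraphOfAdj, edgeSet_subgraphOfAdj,
      Set.union_singleton, Set.union_singleton,
      Set.ncard_insert_of_notMem (by simp [hne.symm, hnew]), Set.ncard_insert_of_notMem hnew]

end SimpleGraph

theorem div_lt_add_two_div_add_one {e n : ℕ} (h : e < 2 * n) :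
    (e : ℚ) / n < (e + 2) / (n + 1) := by
  have hn : (0 : ℚ) < n := by exact_mod_cast (show 0 < n by omega)
  rw [div_lt_div_iff₀ hn (by positivity)]
  have : (e : ℚ) < 2 * n := by exact_mod_cast h
  linarith

namespace Ht

def rank {t : ℕ} : HtV t → ℕ
  | Sum.inl (Sum.inl _) => 1
  | Sum.inl (Sum.inr (Sum.inl _)) => 2
  | Sum.inl (Sum.inr (Sum.inr _)) => 3
  | Sum.inr (Sum.inl (Sum.inl _)) => 0
  | Sum.inr (Sum.inl (Sum.inr (Sum.inl _))) => 2
  | Sum.inr (Sum.inl (Sum.inr (Sum.inr _))) => 3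
  | Sum.inr (Sum.inr (Sum.inl _)) => 1
  | Sum.inr (Sum.inr (Sum.inr (Sum.inl _))) => 2
  | Sum.inr (Sum.inr (Sum.inr (Sum.inr _))) => 3

/-- Contains every neighbour of lower rank; the value at `v`, which has none, is arbitrary. -/
def lowerPair {t : ℕ} : HtV t → HtV t × HtV t
  | Sum.inl (Sum.inl _) => (Sum.inr (Sum.inl (Sum.inl ())), Sum.inr (Sum.inl (Sum.inl ())))
  | Sum.inl (Sum.inr (Sum.inl _)) => (Sum.inl (Sum.inl ()), Sum.inl (Sum.inl ()))
  | Sum.inl (Sum.inr (Sum.inr p)) => (Sum.inl (Sum.inl ()), Sum.inl (Sum.inr (Sum.inl p.1)))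
  | Sum.inr (Sum.inl (Sum.inl _)) =>
      (Sum.inr (Sum.inl (Sum.inl ())), Sum.inr (Sum.inl (Sum.inl ())))
  | Sum.inr (Sum.inl (Sum.inr (Sum.inl _))) => (Sum.inl (Sum.inl ()), Sum.inl (Sum.inl ()))
  | Sum.inr (Sum.inl (Sum.inr (Sum.inr p))) =>
      (Sum.inr (Sum.inl (Sum.inl ())), Sum.inr (Sum.inl (Sum.inr (Sum.inl p.1))))
  | Sum.inr (Sum.inr (Sum.inl _)) =>
      (Sum.inr (Sum.inl (Sum.inl ())), Sum.inr (Sum.inl (Sum.inl ())))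
  | Sum.inr (Sum.inr (Sum.inr (Sum.inl _))) =>
      (Sum.inr (Sum.inl (Sum.inl ())), Sum.inr (Sum.inl (Sum.inl ())))
  | Sum.inr (Sum.inr (Sum.inr (Sum.inr p))) =>
      (Sum.inr (Sum.inr (Sum.inl ())), Sum.inr (Sum.inr (Sum.inr (Sum.inl p.1))))

theorem rank_ne_of_adj {t : ℕ} {a b : HtV t} (h : (Ht t).Adj a b) : rank a ≠ rank b := by
  obtain ⟨-, h | h⟩ := (SimpleGraph.fromRel_adj _ _ _).1 h <;>
  · rcases a with (⟨⟩|i|p) | (⟨⟩|i|p) | (⟨⟩|i|p) <;>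
    rcases b with (⟨⟩|i'|p') | (⟨⟩|i'|p') | (⟨⟩|i'|p') <;>
    simp_all [HtRel, GRel, rank]

theorem eq_lowerPair_of_adj {t : ℕ} {a b : HtV t} (h : (Ht t).Adj a b) (hr : rank b < rank a) :
    b = (lowerPair a).1 ∨ b = (lowerPair a).2 := by
  obtain ⟨-, h | h⟩ := (SimpleGraph.fromRel_adj _ _ _).1 h <;>
  · rcases a with (⟨⟩|i|p) | (⟨⟩|i|p) | (⟨⟩|i|p) <;>
    rcases b with (⟨⟩|i'|p') | (⟨⟩|i'|p') | (⟨⟩|i'|p') <;>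
    simp_all [HtRel, GRel, rank, lowerPair]

theorem ncard_lower_neighbors_le_two {t : ℕ} (a : HtV t) :
    {b | (Ht t).Adj a b ∧ rank b < rank a}.ncard ≤ 2 :=
  calc {b | (Ht t).Adj a b ∧ rank b < rank a}.ncard
      ≤ ({(lowerPair a).1, (lowerPair a).2} : Set (HtV t)).ncard :=
        Set.ncard_le_ncard fun _ hb => eq_lowerPair_of_adj hb.1 hb.2
    _ ≤ 2 := (Set.ncard_insert_le _ _).trans (by simp)

theorem ncard_edgeSet_lt {t : ℕ} (H : (Ht t).Subgraph) (hne : H.verts.Nonempty) :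
    H.edgeSet.ncard < 2 * H.verts.ncard := by
  have := H.ncard_edgeSet_add_le rank (fun _ _ => rank_ne_of_adj) ncard_lower_neighbors_le_two hne
  omega

end Ht

theorem stmt_7_general (t : ℕ) (H : (Ht t).Subgraph)
    (hmax : ∀ H' : (Ht t).Subgraph, H'.verts.Nonempty → subDensity H' ≤ subDensity H) :
    ∀ x ∈ H.verts, ∀ y ∈ H.verts, x ≠ y →
      (Ht t).neighborSet x ∩ (Ht t).neighborSet y ⊆ H.verts := by
  intro x hx y hy hxy z ⟨hxz, hyz⟩
  by_contra hz
  obtain ⟨H', hzH', hverts, hedges⟩ := H.exists_insert_vertex_of_two_adj hx hy hxy hz hxz hyz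
  have hgain := div_lt_add_two_div_add_one (Ht.ncard_edgeSet_lt H ⟨x, hx⟩)
  have hle := hmax H' ⟨z, hzH'⟩
  rw [subDensity, subDensity, hverts, hedges] at hle
  push_cast at hle
  exact hgain.not_ge hle

theorem stmt_7 (t : ℕ) (ht : 4 ≤ t) (H : (Ht t).Subgraph) (hne : H.verts.Nonempty)
    (hmax : ∀ H' : (Ht t).Subgraph, H'.verts.Nonempty → subDensity H' ≤ subDensity H)
    (hmin : ∀ H' : (Ht t).Subgraph, H'.verts.Nonempty →
      (∀ H'' : (Ht t).Subgraph, H''.verts.Nonempty → subDensity H'' ≤ subDensity H') →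
      H.verts.ncard ≤ H'.verts.ncard) :
    ∀ x ∈ H.verts, ∀ y ∈ H.verts, x ≠ y →
      (Ht t).neighborSet x ∩ (Ht t).neighborSet y ⊆ H.verts :=
  stmt_7_general t H hmax
end

section
/- Let t ≥ 4 be an integer and let G be a finite simple graph containing a copy of G_{t−1}(u; u_1, …, u_{t−2}) as a subgraph. Then the K_{2,t}-bootstrap closure Ĝ of G contains a copy of K_{t−1,t−1} as a subgraph. -/
/-! Let `X_i` be the `t - 1` common neighbours of `u` and `u_i`. For `k ≠ i` and `x ∈ X_i`, the
sets `{u, u_k}` and `X_k ∪ {x}` span a copy of `K_{2,t}` minus the edge `u_k x`, so the first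
bootstrap step joins every `u_k` to all of `X_1`. Then `{u, u_1, …, u_{t-2}}` and `X_1` span a
`K_{t-1,t-1}`. -/

theorem HasCopy.mono {W V : Type*} {H : SimpleGraph W} {G G' : SimpleGraph V}
    (h : HasCopy H G) (hle : G ≤ G') : HasCopy H G' :=
  let ⟨f, hf, hadj⟩ := h
  ⟨f, hf, fun _ _ hab => hle (hadj hab)⟩

section Bootstrap

variable {W V : Type*}

theorem bootStep_le_bootClosure (H : SimpleGraph W) (G : SimpleGraph V) :
    bootStep H G ≤ bootClosure H G :=
  le_iSup (bootSeq H G) 1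

theorem bootStep_adj_of_embedding {H : SimpleGraph W} {G : SimpleGraph V} (f : W → V)
    (hf : f.Injective) {a b : W} (hab : H.Adj a b)
    (hmap : ∀ ⦃c d⦄, H.Adj c d → s(c, d) ≠ s(a, b) → G.Adj (f c) (f d)) :
    (bootStep H G).Adj (f a) (f b) := by
  by_cases hG : G.Adj (f a) (f b)
  · exact Or.inl hG
  refine Or.inr ⟨hG, hf.ne hab.ne, f, hf, fun c d hcd => ?_, a, b, hab, Or.inl ⟨rfl, rfl⟩⟩
  by_cases he : s(c, d) = s(a, b)
  · rcases Sym2.eq_iff.mp he with ⟨rfl, rfl⟩ | ⟨rfl, rfl⟩ <;> simp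
  · exact Or.inl (hmap hcd he)

theorem bootStep_completeBipartite_adj {G : SimpleGraph V} {n : ℕ} {x w y : V}
    (d : Fin n → V) (hd : d.Injective) (hxw : x ≠ w) (hyx : y ≠ x) (hdy : ∀ i, d i ≠ y)
    (hx : ∀ i, G.Adj x (d i)) (hw : ∀ i, G.Adj w (d i)) (hwy : G.Adj w y) :
    (bootStep (completeBipartiteGraph (Fin 2) (Fin (n + 1))) G).Adj x y := by
  let f : Fin 2 ⊕ Fin (n + 1) → V := Sum.elim ![x, w] (Fin.cons y d)
  have hf : f.Injective := by
    refine Function.Injective.sumElim ?_ (Fin.cons_injective_iff.mpr ⟨?_, hd⟩) ?_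
    · intro a b
      fin_cases a <;> fin_cases b <;> simp [hxw, hxw.symm]
    · rintro ⟨i, hi⟩
      exact hdy i hi
    · intro a b
      fin_cases a <;> cases b using Fin.cases <;>
        simp [hyx.symm, hwy.ne, (hx _).ne, (hw _).ne]
  have hcross : ∀ a b, s(Sum.inl a, Sum.inr b) ≠ s(Sum.inl 0, Sum.inr 0) →
      G.Adj (f (Sum.inl a)) (f (Sum.inr b)) := by
    intro a b hne
    fin_cases a <;> cases b using Fin.cases <;> simp_all [f]
  refine bootStep_adj_of_embedding f hf (a := Sum.inl 0) (b := Sum.inr 0) (by simp) ?_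
  rintro (a | a) (b | b) hab hne
  · simp at hab
  · exact hcross a b hne
  · exact (hcross b a (by rwa [Sym2.eq_swap])).symm
  · simp at hab

end Bootstrap

namespace GStar

variable {r s : ℕ}

theorem center_adj (p : Fin s × Fin r) :
    (GStar r s).Adj (Sum.inl ()) (Sum.inr (Sum.inr p)) := by
  simp [GStar, GRel]

theorem hub_adj (p : Fin s × Fin r) :
    (GStar r s).Adj (Sum.inr (Sum.inl p.1)) (Sum.inr (Sum.inr p)) := by
  simp [GStar, GRel]

variable {V : Type*} {G : SimpleGraph V} {f : GVert r s → V}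

theorem bootStep_hub_adj (hf : f.Injective)
    (hG : ∀ ⦃a b⦄, (GStar r s).Adj a b → G.Adj (f a) (f b)) (k i : Fin s) (j : Fin r) :
    (bootStep (completeBipartiteGraph (Fin 2) (Fin (r + 1))) G).Adj
      (f (Sum.inr (Sum.inl k))) (f (Sum.inr (Sum.inr (i, j)))) := by
  obtain rfl | hki := eq_or_ne k i
  · exact le_bootStep _ _ (hG (hub_adj (k, j)))
  refine bootStep_completeBipartite_adj (w := f (Sum.inl ()))
    (fun j' => f (Sum.inr (Sum.inr (k, j')))) ?_ (hf.ne (by simp)) (hf.ne (by simp))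
    (fun j' => hf.ne (by simp [hki])) (fun j' => hG (hub_adj (k, j')))
    (fun _ => hG (center_adj _)) (hG (center_adj _))
  exact hf.comp fun a b h => by simpa using h

theorem hasCopy_completeBipartite_bootStep (h : HasCopy (GStar r (s + 1)) G) :
    HasCopy (completeBipartiteGraph (Fin (s + 2)) (Fin r))
      (bootStep (completeBipartiteGraph (Fin 2) (Fin (r + 1))) G) := by
  obtain ⟨f, hf, hG⟩ := h
  let left : Fin (s + 2) → GVert r (s + 1) := Fin.cons (Sum.inl ()) fun k => Sum.inr (Sum.inl k)
  let right : Fin r → GVert r (s + 1) := fun j => Sum.inr (Sum.inr (0, j))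
  have hcross : ∀ i j, (bootStep (completeBipartiteGraph (Fin 2) (Fin (r + 1))) G).Adj
      (f (left i)) (f (right j)) := by
    intro i j
    cases i using Fin.cases with
    | zero => exact le_bootStep _ _ (hG (center_adj _))
    | succ k => exact bootStep_hub_adj hf hG k 0 j
  refine ⟨f ∘ Sum.elim left right, hf.comp ?_, ?_⟩
  · refine Function.Injective.sumElim (Fin.cons_injective_iff.mpr ⟨?_, ?_⟩) ?_ ?_
    · simp
    · intro k k' h
      simpa using h
    · intro j j' h
      simpa [right] using h
    · intro i j
      cases i using Fin.cases <;> simp [left, right]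
  · rintro (i | j) (i' | j') hadj
    · simp at hadj
    · exact hcross i j'
    · exact (hcross i' j).symm
    · simp at hadj

end GStar

theorem stmt_9_general {V : Type*} (t : ℕ) (ht : 4 ≤ t) (G : SimpleGraph V)
    (h : HasCopy (GStar (t - 1) (t - 2)) G) :
    HasCopy (completeBipartiteGraph (Fin (t - 1)) (Fin (t - 1)))
      (bootClosure (completeBipartiteGraph (Fin 2) (Fin t)) G) := by
  obtain ⟨m, rfl⟩ : ∃ m, t = m + 4 := ⟨t - 4, by omega⟩
  exact (GStar.hasCopy_completeBipartite_bootStep h).mono (bootStep_le_bootClosure _ _)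

theorem stmt_9 {V : Type*} [Fintype V] (t : ℕ) (ht : 4 ≤ t) (G : SimpleGraph V)
    (h : HasCopy (GStar (t - 1) (t - 2)) G) :
    HasCopy (completeBipartiteGraph (Fin (t - 1)) (Fin (t - 1)))
      (bootClosure (completeBipartiteGraph (Fin 2) (Fin t)) G) :=
  stmt_9_general t ht G h
end
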